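/- arXiv:2106.02588 — 5 statements merged into one kernel-verified Lean document; each statement's English description precedes it below -/
import Mathlib

section
/- Let β < −1 and let u : (0,∞) → ℝ be a smooth function such that either (a) the support of u is contained in (0, a] for some a < 1 and lim_{r→0⁺} u(r)² |log r|^{1+β} = 0, or (b) the support of u is a compact subset of (1,∞). Then ∫_0^∞ (u(r)²/r) |log r|^β dr ≤ (4/(1+β)²) ∫_0^∞ r u'(r)² |log r|^{2+β} dr. -/
open MeasureTheory Filter Metric Set
open scoped Topology ENNReal

noncomputable section

lemma hardy_amgm (β : ℝ) (hβ : β < -1) {s : ℝ} (hs : 0 < s) (hl : Real.log s ≠ 0)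
    (x y : ℝ) :
    2 * |x| * |y| * |Real.log s| ^ (1 + β) / (-(1+β)) ≤
      1/2 * (x ^ 2 / s * |Real.log s| ^ β) +
      2 / (-(1+β))^2 * (s * y ^ 2 * |Real.log s| ^ (2 + β)) := by
  have hc0 : (0:ℝ) < -(1+β) := by linarith
  set c : ℝ := -(1+β) with hcdef
  set L : ℝ := |Real.log s| with hLdef
  have hl0 : 0 < L := abs_pos.mpr hl
  have hP : 0 < L ^ β := Real.rpow_pos_of_pos hl0 _
  have e1 : L ^ (1 + β) = L * L ^ β := by
    rw [Real.rpow_add hl0, Real.rpow_one]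
  have e2 : L ^ (2 + β) = L * (L * L ^ β) := by
    rw [show (2+β) = 1 + (1+β) by ring, Real.rpow_add hl0, Real.rpow_one, e1]
  rw [e1, e2]
  have hx := abs_nonneg x
  have hy := abs_nonneg y
  have hsx : x^2 = |x|^2 := (sq_abs x).symm
  have hsy : y^2 = |y|^2 := (sq_abs y).symm
  rw [hsx, hsy]
  have key : 0 ≤ (c * |x| - 2 * s * L * |y|)^2 * L ^ β :=
    mul_nonneg (sq_nonneg _) hP.le
  have hs' : s ≠ 0 := ne_of_gt hs
  have hc' : c ≠ 0 := ne_of_gt hc0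
  rw [← sub_nonneg]
  have heq : 1/2 * (|x| ^ 2 / s * L ^ β) + 2 / c ^ 2 * (s * |y| ^ 2 * (L * (L * L ^ β)))
      - 2 * |x| * |y| * (L * L ^ β) / c
      = (c * |x| - 2 * s * L * |y|)^2 * L ^ β / (2 * s * c^2) := by
    field_simp
    ring_nf
  rw [heq]
  positivity

lemma hardy_ftc (u : ℝ → ℝ) (hu : ContDiffOn ℝ (⊤ : ℕ∞) u (Set.Ioi 0)) {x y : ℝ}
    (hx : 0 < x) (hxy : x ≤ y) :
    ∫ s in x..y, 2 * u s * deriv u s = u y ^ 2 - u x ^ 2 := by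
  have hsub : Set.uIcc x y ⊆ Set.Ioi 0 := by
    rw [Set.uIcc_of_le hxy]
    exact fun t ht => lt_of_lt_of_le hx ht.1
  have hder : ∀ t ∈ Set.uIcc x y, HasDerivAt (fun z => u z ^ 2) (2 * u t * deriv u t) t := by
    intro t ht
    have ht0 : t ∈ Set.Ioi (0:ℝ) := hsub ht
    have hd : HasDerivAt u (deriv u t) t :=
      (((hu.differentiableOn (by simp)).differentiableAt
        (isOpen_Ioi.mem_nhds ht0))).hasDerivAt
    simpa [mul_comm, mul_assoc] using hd.fun_pow 2
  have hint : IntervalIntegrable (fun s => 2 * u s * deriv u s) volume x y := by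
    apply ContinuousOn.intervalIntegrable
    have h1 : ContinuousOn u (Set.uIcc x y) := hu.continuousOn.mono hsub
    have h2 : ContinuousOn (deriv u) (Set.uIcc x y) :=
      (hu.continuousOn_deriv_of_isOpen isOpen_Ioi (by simp)).mono hsub
    exact (continuousOn_const.mul h1).mul h2
  exact intervalIntegral.integral_eq_sub_of_hasDerivAt hder hint

lemma hardy_weight_cont (β : ℝ) {s : Set ℝ} (hs : ∀ r ∈ s, 0 < r ∧ Real.log r ≠ 0) :
    ContinuousOn (fun r => |Real.log r| ^ β / r) s := by
  apply ContinuousOn.div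
  · apply ContinuousOn.rpow_const
    · exact (Real.continuousOn_log.mono (fun r hr => ne_of_gt (hs r hr).1)).abs
    · exact fun r hr => Or.inl (abs_ne_zero.mpr (hs r hr).2)
  · exact continuousOn_id
  · exact fun r hr => ne_of_gt (hs r hr).1

lemma hardy_weight_lt_one (β : ℝ) (hβ : β < -1) {x s : ℝ} (hx : 0 < x) (hxs : x ≤ s)
    (hs : s < 1) :
    ∫ r in x..s, |Real.log r| ^ β / r =
      (|Real.log s| ^ (1+β) - |Real.log x| ^ (1+β)) / (-(1+β)) := by
  have hc0 : (0:ℝ) < -(1+β) := by linarith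
  have hsub : Set.uIcc x s ⊆ Set.Ioo (0:ℝ) 1 := by
    rw [Set.uIcc_of_le hxs]
    exact fun t ht => ⟨lt_of_lt_of_le hx ht.1, lt_of_le_of_lt ht.2 hs⟩
  have hlog : ∀ t ∈ Set.Ioo (0:ℝ) 1, Real.log t < 0 := fun t ht => Real.log_neg ht.1 ht.2
  set G : ℝ → ℝ := fun r => (-Real.log r) ^ (1+β) / (-(1+β)) with hG
  have hder : ∀ t ∈ Set.uIcc x s, HasDerivAt G (|Real.log t| ^ β / t) t := by
    intro t ht
    obtain ⟨ht0, ht1⟩ := hsub ht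
    have hlt : Real.log t < 0 := hlog t (hsub ht)
    have h1 : HasDerivAt (fun z => -Real.log z) (-t⁻¹) t :=
      (Real.hasDerivAt_log (ne_of_gt ht0)).neg
    have h2 := (h1.rpow_const (p := 1+β) (Or.inl (by linarith : -Real.log t ≠ 0))).div_const (-(1+β))
    have h1b : (1:ℝ)+β ≠ 0 := by linarith
    have heq : -t⁻¹ * (1 + β) * (-Real.log t) ^ ((1 + β) - 1) / -(1 + β)
        = |Real.log t| ^ β / t := by
      rw [abs_of_neg hlt, show (1+β)-1 = β by ring]
      field_simp
    exact heq ▸ h2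
  have hint : IntervalIntegrable (fun r => |Real.log r| ^ β / r) volume x s := by
    apply ContinuousOn.intervalIntegrable
    exact hardy_weight_cont β (fun r hr =>
      ⟨(hsub hr).1, ne_of_lt (hlog r (hsub hr))⟩)
  rw [intervalIntegral.integral_eq_sub_of_hasDerivAt hder hint]
  have e1 : Real.log s < 0 := hlog s ⟨hx.trans_le hxs, hs⟩
  have e2 : Real.log x < 0 := hlog x ⟨hx, lt_of_le_of_lt hxs hs⟩
  rw [hG, abs_of_neg e1, abs_of_neg e2]
  ring

lemma hardy_weight_lintegral_lt_one (β : ℝ) (hβ : β < -1) {x s : ℝ} (hx : 0 < x)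
    (hxs : x ≤ s) (hs : s < 1) :
    ∫⁻ r in Set.Ioo x s, ENNReal.ofReal (|Real.log r| ^ β / r) ≤
      ENNReal.ofReal (|Real.log s| ^ (1+β) / (-(1+β))) := by
  have hc0 : (0:ℝ) < -(1+β) := by linarith
  have hcont : ContinuousOn (fun r => |Real.log r| ^ β / r) (Set.Icc x s) := by
    apply hardy_weight_cont β
    intro r hr
    have hr0 : 0 < r := lt_of_lt_of_le hx hr.1
    exact ⟨hr0, ne_of_lt (Real.log_neg hr0 (lt_of_le_of_lt hr.2 hs))⟩
  have hInt : IntegrableOn (fun r => |Real.log r| ^ β / r) (Set.Ioo x s) :=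
    (hcont.integrableOn_Icc).mono_set Set.Ioo_subset_Icc_self
  have hnn : 0 ≤ᵐ[volume.restrict (Set.Ioo x s)] fun r => |Real.log r| ^ β / r := by
    refine (ae_restrict_iff' measurableSet_Ioo).mpr (ae_of_all _ fun r hr => ?_)
    exact div_nonneg (Real.rpow_nonneg (abs_nonneg _) _) (lt_of_lt_of_le hx hr.1.le).le
  rw [← ofReal_integral_eq_lintegral_ofReal hInt hnn]
  apply ENNReal.ofReal_le_ofReal
  rw [← integral_Ioc_eq_integral_Ioo, ← intervalIntegral.integral_of_le hxs,
    hardy_weight_lt_one β hβ hx hxs hs]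
  have h1 : |Real.log s| ^ (1 + β) - |Real.log x| ^ (1 + β) ≤ |Real.log s| ^ (1 + β) :=
    sub_le_self _ (Real.rpow_nonneg (abs_nonneg _) _)
  exact (div_le_div_iff_of_pos_right hc0).mpr h1

lemma hardy_weight_lintegral_gt_one (β : ℝ) (hβ : β < -1) {s : ℝ} (hs : 1 < s) :
    ∫⁻ r in Set.Ioi s, ENNReal.ofReal (|Real.log r| ^ β / r) ≤
      ENNReal.ofReal (|Real.log s| ^ (1+β) / (-(1+β))) := by
  have hc0 : (0:ℝ) < -(1+β) := by linarith
  set G : ℝ → ℝ := fun r => -((Real.log r) ^ (1+β)) / (-(1+β)) with hG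
  have hcont : ContinuousOn G (Set.Ici s) := by
    apply ContinuousOn.div_const
    apply ContinuousOn.neg
    apply ContinuousOn.rpow_const
    · exact Real.continuousOn_log.mono (fun r hr => ne_of_gt (lt_trans one_pos (lt_of_lt_of_le hs hr)))
    · exact fun r hr => Or.inl (ne_of_gt (Real.log_pos (lt_of_lt_of_le hs hr)))
  have hderiv : ∀ r ∈ Set.Ioi s, HasDerivAt G ((Real.log r) ^ β / r) r := by
    intro r hr
    have hr1 : 1 < r := hs.trans hr
    have hr0 : 0 < r := lt_trans one_pos hr1
    have hlr : 0 < Real.log r := Real.log_pos hr1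
    have h1 : HasDerivAt Real.log r⁻¹ r := Real.hasDerivAt_log (ne_of_gt hr0)
    have h2 := ((h1.rpow_const (p := 1+β) (Or.inl (ne_of_gt hlr))).neg).div_const (-(1+β))
    have heq : -(r⁻¹ * (1 + β) * Real.log r ^ (1 + β - 1)) / -(1 + β)
        = Real.log r ^ β / r := by
      rw [show (1+β)-1 = β by ring]
      field_simp
      exact div_self (ne_of_lt (by linarith))
    exact heq ▸ h2
  have g'pos : ∀ r ∈ Set.Ioi s, 0 ≤ (Real.log r) ^ β / r :=
    fun r hr => div_nonneg (Real.rpow_nonneg (Real.log_nonneg (hs.trans hr).le) _)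
      (lt_trans one_pos (hs.trans hr)).le
  have hlim : Tendsto G atTop (𝓝 0) := by
    have h := (tendsto_rpow_neg_atTop hc0).comp Real.tendsto_log_atTop
    simp only [neg_neg] at h
    have := (h.neg).div_const (-(1+β))
    simpa [hG, neg_add] using this
  have hint : IntegrableOn (fun r => (Real.log r) ^ β / r) (Set.Ioi s) :=
    integrableOn_Ioi_deriv_of_nonneg (hcont.continuousWithinAt Set.self_mem_Ici) hderiv g'pos hlim
  have hval := integral_Ioi_of_hasDerivAt_of_nonneg (hcont.continuousWithinAt Set.self_mem_Ici)
    hderiv g'pos hlim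
  have hnn : 0 ≤ᵐ[volume.restrict (Set.Ioi s)] fun r => (Real.log r) ^ β / r :=
    (ae_restrict_iff' measurableSet_Ioi).mpr (ae_of_all _ g'pos)
  have hcongr : ∫⁻ r in Set.Ioi s, ENNReal.ofReal (|Real.log r| ^ β / r) =
      ∫⁻ r in Set.Ioi s, ENNReal.ofReal ((Real.log r) ^ β / r) := by
    refine setLIntegral_congr_fun measurableSet_Ioi (fun r hr => ?_)
    rw [abs_of_pos (Real.log_pos (hs.trans hr))]
  rw [hcongr, ← ofReal_integral_eq_lintegral_ofReal hint hnn, hval]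
  apply ENNReal.ofReal_le_ofReal
  rw [abs_of_pos (Real.log_pos hs), hG]
  apply le_of_eq
  ring

lemma hardy_case_b (β : ℝ) (hβ : β < -1) (u : ℝ → ℝ) (hu : ContDiffOn ℝ (⊤ : ℕ∞) u (Set.Ioi 0))
    (hcomp : IsCompact (tsupport u)) (hts : tsupport u ⊆ Set.Ioi 1) :
    (∫⁻ r in Set.Ioi (0 : ℝ), ENNReal.ofReal (u r ^ 2 / r * |Real.log r| ^ β))
      ≤ ENNReal.ofReal (4 / (1 + β) ^ 2) *
        ∫⁻ r in Set.Ioi (0 : ℝ),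
          ENNReal.ofReal (r * deriv u r ^ 2 * |Real.log r| ^ (2 + β)) := by
  have hc0 : (0:ℝ) < -(1+β) := by linarith
  set F : ℝ → ℝ≥0∞ := fun r => ENNReal.ofReal (u r ^ 2 / r * |Real.log r| ^ β) with hF
  set H : ℝ → ℝ≥0∞ := fun r => ENNReal.ofReal (r * deriv u r ^ 2 * |Real.log r| ^ (2 + β)) with hH
  set h : ℝ → ℝ≥0∞ := fun s => ENNReal.ofReal (2 * |u s| * |deriv u s|) with hh
  set g : ℝ → ℝ≥0∞ := fun r => ENNReal.ofReal (|Real.log r| ^ β / r) with hg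
  by_cases hne : (tsupport u).Nonempty
  swap
  · rw [Set.not_nonempty_iff_eq_empty] at hne
    have hu0 : ∀ r : ℝ, u r = 0 := fun r =>
      image_eq_zero_of_notMem_tsupport (by simp [hne])
    have : ∀ r : ℝ, F r = 0 := fun r => by simp [hF, hu0 r]
    rw [lintegral_congr this, lintegral_zero]
    exact zero_le
  set m := sInf (tsupport u) with hm
  have hmem : m ∈ tsupport u := hcomp.sInf_mem hne
  have hm1 : 1 < m := hts hmem
  have hlow : ∀ z ∈ tsupport u, m ≤ z := fun z hz => csInf_le hcomp.bddBelow hz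
  set M := sSup (tsupport u) with hM
  have hup : ∀ z ∈ tsupport u, z ≤ M := fun z hz => le_csSup hcomp.bddAbove hz
  have huz : ∀ r : ℝ, r < m → u r = 0 := fun r hr =>
    image_eq_zero_of_notMem_tsupport (fun hmem' => absurd (hlow r hmem') (not_le.mpr hr))
  set t₀ : ℝ := (1+m)/2 with ht₀
  have ht01 : 1 < t₀ := by rw [ht₀]; linarith
  have ht0m : t₀ < m := by rw [ht₀]; linarith
  -- reduction to Ioi 1
  have hzero1 : ∫⁻ r in Set.Ioc (0:ℝ) 1, F r = 0 := by
    have : ∀ᵐ r ∂volume, r ∈ Set.Ioc (0:ℝ) 1 → F r = (fun _ => (0:ℝ≥0∞)) r :=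
      ae_of_all _ (fun r hr => by simp [hF, huz r (lt_of_le_of_lt hr.2 hm1)])
    rw [setLIntegral_congr_fun_ae measurableSet_Ioc this, lintegral_zero]
  have hred : ∫⁻ r in Set.Ioi (0:ℝ), F r = ∫⁻ r in Set.Ioi (1:ℝ), F r := by
    rw [show Set.Ioi (0:ℝ) = Set.Ioc 0 1 ∪ Set.Ioi 1 from (Set.Ioc_union_Ioi_eq_Ioi zero_le_one).symm,
      lintegral_union measurableSet_Ioi (Set.Ioc_disjoint_Ioi le_rfl), hzero1, zero_add]
  -- continuity / measurability
  have hsub1 : Set.Ioi (1:ℝ) ⊆ Set.Ioi (0:ℝ) := fun r (hr : (1:ℝ) < r) => show (0:ℝ) < r from lt_trans zero_lt_one hr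
  have hucont : ContinuousOn u (Set.Ioi 1) := hu.continuousOn.mono hsub1
  have hu'cont : ContinuousOn (deriv u) (Set.Ioi 1) :=
    (hu.continuousOn_deriv_of_isOpen isOpen_Ioi (by simp)).mono hsub1
  have hlogne : ∀ r ∈ Set.Ioi (1:ℝ), Real.log r ≠ 0 := fun r hr => ne_of_gt (Real.log_pos hr)
  have hrne : ∀ r ∈ Set.Ioi (1:ℝ), r ≠ 0 := fun r hr => ne_of_gt (hsub1 hr)
  have hgcont : ContinuousOn (fun r => |Real.log r| ^ β / r) (Set.Ioi 1) :=
    hardy_weight_cont β (fun r hr => ⟨hsub1 hr, hlogne r hr⟩)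
  have hgmeas : AEMeasurable g (volume.restrict (Set.Ioi 1)) :=
    (hgcont.aemeasurable measurableSet_Ioi).ennreal_ofReal
  have hhmeas : AEMeasurable h (volume.restrict (Set.Ioi 1)) :=
    (((continuousOn_const.mul hucont.abs).mul hu'cont.abs).aemeasurable
      measurableSet_Ioi).ennreal_ofReal
  have hLcont : ContinuousOn (fun r => |Real.log r| ^ β) (Set.Ioi 1) :=
    ((Real.continuousOn_log.mono hrne).abs).rpow_const
      (fun r hr => Or.inl (abs_ne_zero.mpr (hlogne r hr)))
  have hL2cont : ContinuousOn (fun r => |Real.log r| ^ (2+β)) (Set.Ioi 1) :=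
    ((Real.continuousOn_log.mono hrne).abs).rpow_const
      (fun r hr => Or.inl (abs_ne_zero.mpr (hlogne r hr)))
  have hFmeas : AEMeasurable F (volume.restrict (Set.Ioi 1)) :=
    ((((hucont.pow 2).div continuousOn_id hrne).mul hLcont).aemeasurable
      measurableSet_Ioi).ennreal_ofReal
  have hHmeas : AEMeasurable H (volume.restrict (Set.Ioi 1)) :=
    (((continuousOn_id.mul (hu'cont.pow 2)).mul hL2cont).aemeasurable
      measurableSet_Ioi).ennreal_ofReal
  -- finiteness of A
  obtain ⟨K, hK⟩ := hcomp.exists_bound_of_continuousOn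
    (hu.continuousOn.mono (fun z hz => show (0:ℝ) < z from lt_trans zero_lt_one (hts hz : (1:ℝ) < z)))
  have hFbound : ∀ r ∈ Set.Ioi (1:ℝ), F r ≤
      (Set.Icc m M).indicator (fun _ => ENNReal.ofReal (K^2 * (Real.log m)^β)) r := by
    intro r hr
    by_cases hrt : r ∈ tsupport u
    · rw [Set.indicator_of_mem (Set.mem_Icc.mpr ⟨hlow r hrt, hup r hrt⟩)]
      apply ENNReal.ofReal_le_ofReal
      have hr1 : (1:ℝ) < r := hr
      have hlogm : 0 < Real.log m := Real.log_pos hm1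
      have h1 : |Real.log r| ^ β ≤ (Real.log m) ^ β := by
        rw [abs_of_pos (Real.log_pos hr1)]
        exact Real.rpow_le_rpow_of_nonpos hlogm
          (Real.log_le_log (by linarith) (hlow r hrt)) (by linarith)
      have h2 : u r ^ 2 / r ≤ K ^ 2 := by
        have hKr : |u r| ≤ K := hK r hrt
        have : u r ^ 2 ≤ K ^ 2 := by
          rw [← sq_abs]
          exact pow_le_pow_left₀ (abs_nonneg _) hKr 2
        calc u r ^ 2 / r ≤ u r ^ 2 / 1 := by
              apply div_le_div_of_nonneg_left (sq_nonneg _) one_pos hr1.le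
          _ = u r ^ 2 := div_one _
          _ ≤ K ^ 2 := this
      exact mul_le_mul h2 h1 (Real.rpow_nonneg (abs_nonneg _) _)
        (by positivity)
    · have h0 : F r = 0 := by simp [hF, image_eq_zero_of_notMem_tsupport hrt]
      rw [h0]; exact zero_le
  have hAfin : ∫⁻ r in Set.Ioi (1:ℝ), F r ≠ ⊤ := by
    have hle : ∫⁻ r in Set.Ioi (1:ℝ), F r ≤
        ENNReal.ofReal (K^2 * (Real.log m)^β) * volume (Set.Icc m M) := by
      calc ∫⁻ r in Set.Ioi (1:ℝ), F r
          ≤ ∫⁻ r in Set.Ioi (1:ℝ),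
            (Set.Icc m M).indicator (fun _ => ENNReal.ofReal (K^2 * (Real.log m)^β)) r :=
            lintegral_mono_ae ((ae_restrict_iff' measurableSet_Ioi).mpr (ae_of_all _ hFbound))
        _ ≤ ∫⁻ r, (Set.Icc m M).indicator (fun _ => ENNReal.ofReal (K^2 * (Real.log m)^β)) r :=
            setLIntegral_le_lintegral _ _
        _ = ENNReal.ofReal (K^2 * (Real.log m)^β) * volume (Set.Icc m M) := by
            rw [lintegral_indicator measurableSet_Icc, setLIntegral_const]
    exact ne_top_of_le_ne_top (by
      rw [Real.volume_Icc]
      exact ENNReal.mul_ne_top ENNReal.ofReal_ne_top ENNReal.ofReal_ne_top) hle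
  -- FTC pointwise bound
  have hFTC : ∀ r ∈ Set.Ioi (1:ℝ), ENNReal.ofReal (u r ^ 2) ≤
      ∫⁻ s in Set.Ioi 1 ∩ Set.Iio r, h s := by
    intro r hr
    by_cases hrt : r ≤ t₀
    · have h0 : u r = 0 := huz r (lt_of_le_of_lt hrt ht0m)
      simp [h0]
    · push_neg at hrt
      have ht00 : (0:ℝ) < t₀ := by linarith
      have hut0 : u t₀ = 0 := huz t₀ ht0m
      have habs : u r ^ 2 ≤ ∫ s in Set.Ioo t₀ r, 2 * |u s| * |deriv u s| := by
        have hval : u r ^ 2 = ∫ s in t₀..r, 2 * u s * deriv u s := by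
          rw [hardy_ftc u hu ht00 hrt.le, hut0]; ring
        calc u r ^ 2 = ∫ s in t₀..r, 2 * u s * deriv u s := hval
          _ ≤ |∫ s in t₀..r, 2 * u s * deriv u s| := le_abs_self _
          _ ≤ ∫ s in t₀..r, |2 * u s * deriv u s| :=
              intervalIntegral.abs_integral_le_integral_abs hrt.le
          _ = ∫ s in Set.Ioc t₀ r, |2 * u s * deriv u s| :=
              intervalIntegral.integral_of_le hrt.le
          _ = ∫ s in Set.Ioo t₀ r, |2 * u s * deriv u s| := integral_Ioc_eq_integral_Ioo
          _ = ∫ s in Set.Ioo t₀ r, 2 * |u s| * |deriv u s| :=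
              setIntegral_congr_fun measurableSet_Ioo
                (fun s _ => by rw [abs_mul, abs_mul, abs_two])
      have hsubIcc : Set.Icc t₀ r ⊆ Set.Ioi (0:ℝ) := fun s hs => lt_of_lt_of_le ht00 hs.1
      have hint2 : IntegrableOn (fun s => 2 * |u s| * |deriv u s|) (Set.Ioo t₀ r) := by
        apply ContinuousOn.integrableOn_Icc (a := t₀) (b := r) ?_ |>.mono_set
          Set.Ioo_subset_Icc_self
        exact (continuousOn_const.mul (hu.continuousOn.mono hsubIcc).abs).mul
          ((hu.continuousOn_deriv_of_isOpen isOpen_Ioi (by simp)).mono hsubIcc).abs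
      have hnn2 : 0 ≤ᵐ[volume.restrict (Set.Ioo t₀ r)] fun s => 2 * |u s| * |deriv u s| :=
        ae_of_all _ (fun s => by positivity)
      calc ENNReal.ofReal (u r ^ 2)
          ≤ ENNReal.ofReal (∫ s in Set.Ioo t₀ r, 2 * |u s| * |deriv u s|) :=
            ENNReal.ofReal_le_ofReal habs
        _ = ∫⁻ s in Set.Ioo t₀ r, h s := ofReal_integral_eq_lintegral_ofReal hint2 hnn2
        _ ≤ ∫⁻ s in Set.Ioi 1 ∩ Set.Iio r, h s :=
            lintegral_mono_set (fun s hs => ⟨lt_trans ht01 hs.1, hs.2⟩)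
  -- step 1
  have step1 : ∀ r ∈ Set.Ioi (1:ℝ), F r ≤
      ∫⁻ s in Set.Ioi 1, ((Set.Iio r).indicator h s) * g r := by
    intro r hr
    have hr0 : (0:ℝ) < r := hsub1 hr
    rw [lintegral_mul_const' (g r) _ (by rw [hg]; exact ENNReal.ofReal_ne_top),
      lintegral_indicator measurableSet_Iio, Measure.restrict_restrict measurableSet_Iio]
    have hFr : F r = ENNReal.ofReal (u r ^ 2) * g r := by
      rw [hF, hg, ← ENNReal.ofReal_mul (sq_nonneg _)]
      congr 1
      ring
    rw [hFr, Set.inter_comm]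
    exact mul_le_mul_left (hFTC r hr) _
  have step1' : ∫⁻ r in Set.Ioi (1:ℝ), F r ≤
      ∫⁻ r in Set.Ioi 1, ∫⁻ s in Set.Ioi 1, ((Set.Iio r).indicator h s) * g r :=
    lintegral_mono_ae ((ae_restrict_iff' measurableSet_Ioi).mpr (ae_of_all _ step1))
  -- swap
  have hswap : ∫⁻ r in Set.Ioi (1:ℝ), ∫⁻ s in Set.Ioi 1, ((Set.Iio r).indicator h s) * g r
      = ∫⁻ s in Set.Ioi (1:ℝ), ∫⁻ r in Set.Ioi 1, ((Set.Iio r).indicator h s) * g r := by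
    apply lintegral_lintegral_swap
    have h1 : AEMeasurable (fun p : ℝ×ℝ =>
        ({q : ℝ×ℝ | q.2 < q.1}.indicator (fun q => h q.2) p) * g p.1)
        ((volume.restrict (Set.Ioi 1)).prod (volume.restrict (Set.Ioi 1))) := by
      apply AEMeasurable.mul
      · exact (hhmeas.comp_snd).indicator (measurableSet_lt measurable_snd measurable_fst)
      · exact hgmeas.comp_fst
    have heqf : (fun p : ℝ×ℝ =>
        ({q : ℝ×ℝ | q.2 < q.1}.indicator (fun q => h q.2) p) * g p.1)
        = Function.uncurry (fun r s => ((Set.Iio r).indicator h s) * g r) := by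
      funext p
      simp only [Function.uncurry, Set.indicator_apply, Set.mem_Iio, Set.mem_setOf_eq]
    exact heqf ▸ h1
  -- inner integral and AM-GM
  have step2 : ∀ s ∈ Set.Ioi (1:ℝ), (∫⁻ r in Set.Ioi 1, ((Set.Iio r).indicator h s) * g r) ≤
      ENNReal.ofReal (1/2) * F s + ENNReal.ofReal (2/(-(1+β))^2) * H s := by
    intro s hs1
    have hs0 : (0:ℝ) < s := hsub1 hs1
    have e1 : ∀ r : ℝ, ((Set.Iio r).indicator h s) * g r = h s * ((Set.Ioi s).indicator g r) := by
      intro r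
      by_cases hrs : s < r
      · rw [Set.indicator_of_mem (Set.mem_Iio.mpr hrs), Set.indicator_of_mem (Set.mem_Ioi.mpr hrs)]
      · rw [Set.indicator_of_notMem (by simpa using hrs),
          Set.indicator_of_notMem (by simpa using hrs), zero_mul, mul_zero]
    calc (∫⁻ r in Set.Ioi 1, ((Set.Iio r).indicator h s) * g r)
        = ∫⁻ r in Set.Ioi 1, h s * ((Set.Ioi s).indicator g r) := by
          exact lintegral_congr (fun r => e1 r)
      _ = h s * ∫⁻ r in Set.Ioi 1, (Set.Ioi s).indicator g r :=
          lintegral_const_mul' _ _ (by rw [hh]; exact ENNReal.ofReal_ne_top)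
      _ = h s * ∫⁻ r in Set.Ioi s ∩ Set.Ioi 1, g r := by
          rw [lintegral_indicator measurableSet_Ioi, Measure.restrict_restrict measurableSet_Ioi]
      _ = h s * ∫⁻ r in Set.Ioi s, g r := by
          rw [Set.inter_eq_left.mpr (Set.Ioi_subset_Ioi hs1.le)]
      _ ≤ h s * ENNReal.ofReal (|Real.log s| ^ (1+β) / (-(1+β))) :=
          mul_le_mul_right (hardy_weight_lintegral_gt_one β hβ hs1) _
      _ = ENNReal.ofReal (2 * |u s| * |deriv u s| * (|Real.log s| ^ (1+β) / (-(1+β)))) := by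
          rw [hh, ← ENNReal.ofReal_mul (by positivity)]
      _ ≤ ENNReal.ofReal (1/2 * (u s ^ 2 / s * |Real.log s| ^ β)
            + 2/(-(1+β))^2 * (s * deriv u s ^ 2 * |Real.log s| ^ (2+β))) := by
          apply ENNReal.ofReal_le_ofReal
          have hamgm := hardy_amgm β hβ hs0 (hlogne s hs1) (u s) (deriv u s)
          calc 2 * |u s| * |deriv u s| * (|Real.log s| ^ (1+β) / (-(1+β)))
              = 2 * |u s| * |deriv u s| * |Real.log s| ^ (1+β) / (-(1+β)) := by ring
            _ ≤ _ := hamgm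
      _ = ENNReal.ofReal (1/2) * F s + ENNReal.ofReal (2/(-(1+β))^2) * H s := by
          have e1 := ENNReal.ofReal_mul (p := 1/2)
            (q := u s ^ 2 / s * |Real.log s| ^ β) (by norm_num)
          have e2 := ENNReal.ofReal_mul (p := 2/(-(1+β))^2)
            (q := s * deriv u s ^ 2 * |Real.log s| ^ (2+β)) (by positivity)
          rw [ENNReal.ofReal_add (by positivity) (by positivity), e1, e2, hF, hH]
  have step2' : ∫⁻ s in Set.Ioi (1:ℝ), ∫⁻ r in Set.Ioi 1, ((Set.Iio r).indicator h s) * g r ≤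
      ENNReal.ofReal (1/2) * (∫⁻ s in Set.Ioi 1, F s)
        + ENNReal.ofReal (2/(-(1+β))^2) * ∫⁻ s in Set.Ioi 1, H s := by
    calc ∫⁻ s in Set.Ioi (1:ℝ), ∫⁻ r in Set.Ioi 1, ((Set.Iio r).indicator h s) * g r
        ≤ ∫⁻ s in Set.Ioi 1,
          (ENNReal.ofReal (1/2) * F s + ENNReal.ofReal (2/(-(1+β))^2) * H s) :=
          lintegral_mono_ae ((ae_restrict_iff' measurableSet_Ioi).mpr (ae_of_all _ step2))
      _ = _ := by
          rw [lintegral_add_left' (hFmeas.const_mul _),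
            lintegral_const_mul' _ _ ENNReal.ofReal_ne_top,
            lintegral_const_mul' _ _ ENNReal.ofReal_ne_top]
  have main : ∫⁻ r in Set.Ioi (1:ℝ), F r ≤
      ENNReal.ofReal (1/2) * (∫⁻ r in Set.Ioi 1, F r)
        + ENNReal.ofReal (2/(-(1+β))^2) * ∫⁻ s in Set.Ioi 1, H s :=
    step1'.trans (le_of_le_of_eq (le_of_eq hswap) rfl |>.trans step2')
  -- cancellation
  have hsplit2 : ∫⁻ r in Set.Ioi (1:ℝ), F r
      = ENNReal.ofReal (1/2) * (∫⁻ r in Set.Ioi (1:ℝ), F r)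
        + ENNReal.ofReal (1/2) * (∫⁻ r in Set.Ioi (1:ℝ), F r) := by
    rw [← add_mul, ← ENNReal.ofReal_add (by norm_num) (by norm_num)]
    norm_num
  have hhalf : ENNReal.ofReal (1/2) * (∫⁻ r in Set.Ioi (1:ℝ), F r)
      ≤ ENNReal.ofReal (2/(-(1+β))^2) * ∫⁻ s in Set.Ioi 1, H s := by
    have hmain2 := main
    nth_rewrite 1 [hsplit2] at hmain2
    exact (ENNReal.add_le_add_iff_left (ENNReal.mul_ne_top ENNReal.ofReal_ne_top hAfin)).mp hmain2
  calc ∫⁻ r in Set.Ioi (0:ℝ), F r = ∫⁻ r in Set.Ioi (1:ℝ), F r := hred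
    _ = ENNReal.ofReal 2 * (ENNReal.ofReal (1/2) * (∫⁻ r in Set.Ioi (1:ℝ), F r)) := by
        rw [← mul_assoc, ← ENNReal.ofReal_mul (by norm_num)]
        norm_num
    _ ≤ ENNReal.ofReal 2 * (ENNReal.ofReal (2/(-(1+β))^2) * ∫⁻ s in Set.Ioi 1, H s) :=
        mul_le_mul_right hhalf _
    _ = ENNReal.ofReal (4/(1+β)^2) * ∫⁻ s in Set.Ioi 1, H s := by
        rw [← mul_assoc, ← ENNReal.ofReal_mul (by norm_num)]
        congr 2
        rw [neg_sq]
        ring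
    _ ≤ ENNReal.ofReal (4/(1+β)^2) * ∫⁻ s in Set.Ioi 0, H s :=
        mul_le_mul_right (lintegral_mono_set hsub1) _

lemma hardy_case_a (β : ℝ) (hβ : β < -1) (u : ℝ → ℝ) (hu : ContDiffOn ℝ (⊤ : ℕ∞) u (Set.Ioi 0))
    {a : ℝ} (ha0 : 0 < a) (ha1 : a < 1) (hsupp : Function.support u ⊆ Set.Ioc 0 a) :
    (∫⁻ r in Set.Ioi (0 : ℝ), ENNReal.ofReal (u r ^ 2 / r * |Real.log r| ^ β))
      ≤ ENNReal.ofReal (4 / (1 + β) ^ 2) *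
        ∫⁻ r in Set.Ioi (0 : ℝ),
          ENNReal.ofReal (r * deriv u r ^ 2 * |Real.log r| ^ (2 + β)) := by
  have hc0 : (0:ℝ) < -(1+β) := by linarith
  set F : ℝ → ℝ≥0∞ := fun r => ENNReal.ofReal (u r ^ 2 / r * |Real.log r| ^ β) with hF
  set H : ℝ → ℝ≥0∞ := fun r => ENNReal.ofReal (r * deriv u r ^ 2 * |Real.log r| ^ (2 + β)) with hH
  set h : ℝ → ℝ≥0∞ := fun s => ENNReal.ofReal (2 * |u s| * |deriv u s|) with hh
  set g : ℝ → ℝ≥0∞ := fun r => ENNReal.ofReal (|Real.log r| ^ β / r) with hg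
  have huz : ∀ r : ℝ, r ∉ Set.Ioc 0 a → u r = 0 :=
    fun r hr => not_ne_iff.mp (fun h0 => hr (hsupp h0))
  set b : ℝ := (a+1)/2 with hb
  have hab : a < b := by rw [hb]; linarith
  have hb1 : b < 1 := by rw [hb]; linarith
  have hub : u b = 0 := huz b (fun hmem => absurd hmem.2 (not_le.mpr hab))
  -- reduction to Ioo 0 1
  have hzero1 : ∫⁻ r in Set.Ici (1:ℝ), F r = 0 := by
    have : ∀ᵐ r ∂volume, r ∈ Set.Ici (1:ℝ) → F r = (fun _ => (0:ℝ≥0∞)) r :=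
      ae_of_all _ (fun r hr => by
        simp [hF, huz r (fun hmem => absurd hmem.2 (not_le.mpr (lt_of_lt_of_le ha1 hr)))])
    rw [setLIntegral_congr_fun_ae measurableSet_Ici this, lintegral_zero]
  have hred : ∫⁻ r in Set.Ioi (0:ℝ), F r = ∫⁻ r in Set.Ioo (0:ℝ) 1, F r := by
    rw [show Set.Ioi (0:ℝ) = Set.Ioo 0 1 ∪ Set.Ici 1 from (Set.Ioo_union_Ici_eq_Ioi zero_lt_one).symm,
      lintegral_union measurableSet_Ici
        ((Set.Iio_disjoint_Ici le_rfl).mono_left Set.Ioo_subset_Iio_self),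
      hzero1, add_zero]
  -- measurability of F on Ioo ε 1
  have hFmeasOn : ∀ ε : ℝ, 0 < ε → AEMeasurable F (volume.restrict (Set.Ioo ε 1)) := by
    intro ε hε
    have hsubε : Set.Ioo ε 1 ⊆ Set.Ioi (0:ℝ) := fun r hr => hε.trans hr.1
    have hrne : ∀ r ∈ Set.Ioo ε 1, r ≠ 0 := fun r hr => ne_of_gt (hsubε hr)
    have hlogne : ∀ r ∈ Set.Ioo ε 1, Real.log r ≠ 0 :=
      fun r hr => ne_of_lt (Real.log_neg (hsubε hr) hr.2)
    have hLcont : ContinuousOn (fun r => |Real.log r| ^ β) (Set.Ioo ε 1) :=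
      ((Real.continuousOn_log.mono hrne).abs).rpow_const
        (fun r hr => Or.inl (abs_ne_zero.mpr (hlogne r hr)))
    exact (((((hu.continuousOn.mono hsubε).pow 2).div continuousOn_id hrne).mul
      hLcont).aemeasurable measurableSet_Ioo).ennreal_ofReal
  -- the core estimate
  have hcore : ∀ ε : ℝ, 0 < ε → ∫⁻ r in Set.Ioo ε 1, F r ≤
      ENNReal.ofReal (4/(1+β)^2) * ∫⁻ r in Set.Ioi 0, H r := by
    intro ε hε
    have hsubε : Set.Ioo ε 1 ⊆ Set.Ioi (0:ℝ) := fun r hr => hε.trans hr.1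
    have hrne : ∀ r ∈ Set.Ioo ε 1, r ≠ 0 := fun r hr => ne_of_gt (hsubε hr)
    have hlogneg : ∀ r ∈ Set.Ioo ε 1, Real.log r < 0 :=
      fun r hr => Real.log_neg (hsubε hr) hr.2
    have hlogne : ∀ r ∈ Set.Ioo ε 1, Real.log r ≠ 0 := fun r hr => ne_of_lt (hlogneg r hr)
    have hucont : ContinuousOn u (Set.Ioo ε 1) := hu.continuousOn.mono hsubε
    have hu'cont : ContinuousOn (deriv u) (Set.Ioo ε 1) :=
      (hu.continuousOn_deriv_of_isOpen isOpen_Ioi (by simp)).mono hsubε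
    have hgcont : ContinuousOn (fun r => |Real.log r| ^ β / r) (Set.Ioo ε 1) :=
      hardy_weight_cont β (fun r hr => ⟨hsubε hr, hlogne r hr⟩)
    have hgmeas : AEMeasurable g (volume.restrict (Set.Ioo ε 1)) :=
      (hgcont.aemeasurable measurableSet_Ioo).ennreal_ofReal
    have hhmeas : AEMeasurable h (volume.restrict (Set.Ioo ε 1)) :=
      (((continuousOn_const.mul hucont.abs).mul hu'cont.abs).aemeasurable
        measurableSet_Ioo).ennreal_ofReal
    have hL2cont : ContinuousOn (fun r => |Real.log r| ^ (2+β)) (Set.Ioo ε 1) :=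
      ((Real.continuousOn_log.mono hrne).abs).rpow_const
        (fun r hr => Or.inl (abs_ne_zero.mpr (hlogne r hr)))
    have hHmeas : AEMeasurable H (volume.restrict (Set.Ioo ε 1)) :=
      (((continuousOn_id.mul (hu'cont.pow 2)).mul hL2cont).aemeasurable
        measurableSet_Ioo).ennreal_ofReal
    have hFmeas := hFmeasOn ε hε
    -- finiteness
    obtain ⟨K, hK⟩ := (isCompact_Icc (a := ε) (b := a)).exists_bound_of_continuousOn
      (hu.continuousOn.mono (fun z hz => lt_of_lt_of_le hε hz.1))
    have hla : 0 < |Real.log a| := abs_pos.mpr (ne_of_lt (Real.log_neg ha0 ha1))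
    have hFbound : ∀ r ∈ Set.Ioo ε 1, F r ≤
        (Set.Icc ε a).indicator (fun _ => ENNReal.ofReal (K^2/ε * |Real.log a|^β)) r := by
      intro r hr
      by_cases hra : r ≤ a
      · rw [Set.indicator_of_mem (Set.mem_Icc.mpr ⟨hr.1.le, hra⟩)]
        apply ENNReal.ofReal_le_ofReal
        have hr0 : 0 < r := hsubε hr
        have h1 : |Real.log r| ^ β ≤ |Real.log a| ^ β := by
          apply Real.rpow_le_rpow_of_nonpos hla ?_ (by linarith)
          rw [abs_of_neg (Real.log_neg hr0 hr.2), abs_of_neg (Real.log_neg ha0 ha1)]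
          exact neg_le_neg (Real.log_le_log hr0 hra)
        have h2 : u r ^ 2 / r ≤ K ^ 2 / ε := by
          apply div_le_div₀ (sq_nonneg K) ?_ hε hr.1.le
          rw [← sq_abs]
          exact pow_le_pow_left₀ (abs_nonneg _) (hK r ⟨hr.1.le, hra⟩) 2
        exact mul_le_mul h2 h1 (Real.rpow_nonneg (abs_nonneg _) _) (by positivity)
      · have h0 : u r = 0 := huz r (fun hmem => absurd hmem.2 hra)
        have : F r = 0 := by simp [hF, h0]
        rw [this]; exact zero_le
    have hAfin : ∫⁻ r in Set.Ioo ε 1, F r ≠ ⊤ := by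
      have hle : ∫⁻ r in Set.Ioo ε 1, F r ≤
          ENNReal.ofReal (K^2/ε * |Real.log a|^β) * volume (Set.Icc ε a) := by
        calc ∫⁻ r in Set.Ioo ε 1, F r
            ≤ ∫⁻ r in Set.Ioo ε 1,
              (Set.Icc ε a).indicator (fun _ => ENNReal.ofReal (K^2/ε * |Real.log a|^β)) r :=
              lintegral_mono_ae ((ae_restrict_iff' measurableSet_Ioo).mpr (ae_of_all _ hFbound))
          _ ≤ ∫⁻ r, (Set.Icc ε a).indicator
                (fun _ => ENNReal.ofReal (K^2/ε * |Real.log a|^β)) r :=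
              setLIntegral_le_lintegral _ _
          _ = _ := by rw [lintegral_indicator measurableSet_Icc, setLIntegral_const]
      exact ne_top_of_le_ne_top (by
        rw [Real.volume_Icc]
        exact ENNReal.mul_ne_top ENNReal.ofReal_ne_top ENNReal.ofReal_ne_top) hle
    -- FTC pointwise bound
    have hFTC : ∀ r ∈ Set.Ioo ε 1, ENNReal.ofReal (u r ^ 2) ≤
        ∫⁻ s in Set.Ioo ε 1 ∩ Set.Ioi r, h s := by
      intro r hr
      by_cases hra : a < r
      · have h0 : u r = 0 := huz r (fun hmem => absurd hmem.2 (not_le.mpr hra))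
        simp [h0]
      · push_neg at hra
        have hr0 : (0:ℝ) < r := hsubε hr
        have hrb : r ≤ b := hra.trans hab.le
        have habs : u r ^ 2 ≤ ∫ s in Set.Ioo r b, 2 * |u s| * |deriv u s| := by
          have hval : u r ^ 2 = -∫ s in r..b, 2 * u s * deriv u s := by
            rw [hardy_ftc u hu hr0 hrb, hub]; ring
          calc u r ^ 2 = -∫ s in r..b, 2 * u s * deriv u s := hval
            _ ≤ |∫ s in r..b, 2 * u s * deriv u s| := neg_le_abs _
            _ ≤ ∫ s in r..b, |2 * u s * deriv u s| :=
                intervalIntegral.abs_integral_le_integral_abs hrb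
            _ = ∫ s in Set.Ioc r b, |2 * u s * deriv u s| :=
                intervalIntegral.integral_of_le hrb
            _ = ∫ s in Set.Ioo r b, |2 * u s * deriv u s| := integral_Ioc_eq_integral_Ioo
            _ = ∫ s in Set.Ioo r b, 2 * |u s| * |deriv u s| :=
                setIntegral_congr_fun measurableSet_Ioo
                  (fun s _ => by rw [abs_mul, abs_mul, abs_two])
        have hsubIcc : Set.Icc r b ⊆ Set.Ioi (0:ℝ) := fun s hs => lt_of_lt_of_le hr0 hs.1
        have hint2 : IntegrableOn (fun s => 2 * |u s| * |deriv u s|) (Set.Ioo r b) := by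
          apply ContinuousOn.integrableOn_Icc (a := r) (b := b) ?_ |>.mono_set
            Set.Ioo_subset_Icc_self
          exact (continuousOn_const.mul (hu.continuousOn.mono hsubIcc).abs).mul
            ((hu.continuousOn_deriv_of_isOpen isOpen_Ioi (by simp)).mono hsubIcc).abs
        have hnn2 : 0 ≤ᵐ[volume.restrict (Set.Ioo r b)] fun s => 2 * |u s| * |deriv u s| :=
          ae_of_all _ (fun s => by positivity)
        calc ENNReal.ofReal (u r ^ 2)
            ≤ ENNReal.ofReal (∫ s in Set.Ioo r b, 2 * |u s| * |deriv u s|) :=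
              ENNReal.ofReal_le_ofReal habs
          _ = ∫⁻ s in Set.Ioo r b, h s := ofReal_integral_eq_lintegral_ofReal hint2 hnn2
          _ ≤ ∫⁻ s in Set.Ioo ε 1 ∩ Set.Ioi r, h s :=
              lintegral_mono_set (fun s hs =>
                ⟨⟨hr.1.trans hs.1, lt_trans hs.2 hb1⟩, hs.1⟩)
    -- step 1
    have step1 : ∀ r ∈ Set.Ioo ε 1, F r ≤
        ∫⁻ s in Set.Ioo ε 1, ((Set.Ioi r).indicator h s) * g r := by
      intro r hr
      rw [lintegral_mul_const' (g r) _ (by rw [hg]; exact ENNReal.ofReal_ne_top),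
        lintegral_indicator measurableSet_Ioi, Measure.restrict_restrict measurableSet_Ioi]
      have hFr : F r = ENNReal.ofReal (u r ^ 2) * g r := by
        rw [hF, hg, ← ENNReal.ofReal_mul (sq_nonneg _)]
        congr 1
        ring
      rw [hFr, Set.inter_comm]
      exact mul_le_mul_left (hFTC r hr) _
    have step1' : ∫⁻ r in Set.Ioo ε 1, F r ≤
        ∫⁻ r in Set.Ioo ε 1, ∫⁻ s in Set.Ioo ε 1, ((Set.Ioi r).indicator h s) * g r :=
      lintegral_mono_ae ((ae_restrict_iff' measurableSet_Ioo).mpr (ae_of_all _ step1))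
    -- swap
    have hswap : ∫⁻ r in Set.Ioo ε 1, ∫⁻ s in Set.Ioo ε 1, ((Set.Ioi r).indicator h s) * g r
        = ∫⁻ s in Set.Ioo ε 1, ∫⁻ r in Set.Ioo ε 1, ((Set.Ioi r).indicator h s) * g r := by
      apply lintegral_lintegral_swap
      have h1 : AEMeasurable (fun p : ℝ×ℝ =>
          ({q : ℝ×ℝ | q.1 < q.2}.indicator (fun q => h q.2) p) * g p.1)
          ((volume.restrict (Set.Ioo ε 1)).prod (volume.restrict (Set.Ioo ε 1))) := by
        apply AEMeasurable.mul
        · exact (hhmeas.comp_snd).indicator (measurableSet_lt measurable_fst measurable_snd)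
        · exact hgmeas.comp_fst
      have heqf : (fun p : ℝ×ℝ =>
          ({q : ℝ×ℝ | q.1 < q.2}.indicator (fun q => h q.2) p) * g p.1)
          = Function.uncurry (fun r s => ((Set.Ioi r).indicator h s) * g r) := by
        funext p
        simp only [Function.uncurry, Set.indicator_apply, Set.mem_Ioi, Set.mem_setOf_eq]
      exact heqf ▸ h1
    -- inner integral and AM-GM
    have step2 : ∀ s ∈ Set.Ioo ε 1, (∫⁻ r in Set.Ioo ε 1, ((Set.Ioi r).indicator h s) * g r) ≤
        ENNReal.ofReal (1/2) * F s + ENNReal.ofReal (2/(-(1+β))^2) * H s := by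
      intro s hsm
      have hs0 : (0:ℝ) < s := hsubε hsm
      have e1 : ∀ r : ℝ, ((Set.Ioi r).indicator h s) * g r
          = h s * ((Set.Iio s).indicator g r) := by
        intro r
        by_cases hrs : r < s
        · rw [Set.indicator_of_mem (Set.mem_Ioi.mpr hrs), Set.indicator_of_mem (Set.mem_Iio.mpr hrs)]
        · rw [Set.indicator_of_notMem (by simpa using hrs),
            Set.indicator_of_notMem (by simpa using hrs), zero_mul, mul_zero]
      have hseteq : Set.Iio s ∩ Set.Ioo ε 1 = Set.Ioo ε s := by
        ext r
        simp only [Set.mem_inter_iff, Set.mem_Iio, Set.mem_Ioo]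
        exact ⟨fun ⟨h1, h2⟩ => ⟨h2.1, h1⟩, fun ⟨h1, h2⟩ => ⟨h2, h1, h2.trans hsm.2⟩⟩
      calc (∫⁻ r in Set.Ioo ε 1, ((Set.Ioi r).indicator h s) * g r)
          = ∫⁻ r in Set.Ioo ε 1, h s * ((Set.Iio s).indicator g r) :=
            lintegral_congr (fun r => e1 r)
        _ = h s * ∫⁻ r in Set.Ioo ε 1, (Set.Iio s).indicator g r :=
            lintegral_const_mul' _ _ (by rw [hh]; exact ENNReal.ofReal_ne_top)
        _ = h s * ∫⁻ r in Set.Ioo ε s, g r := by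
            rw [lintegral_indicator measurableSet_Iio,
              Measure.restrict_restrict measurableSet_Iio, hseteq]
        _ ≤ h s * ENNReal.ofReal (|Real.log s| ^ (1+β) / (-(1+β))) :=
            mul_le_mul_right (hardy_weight_lintegral_lt_one β hβ hε hsm.1.le hsm.2) _
        _ = ENNReal.ofReal (2 * |u s| * |deriv u s| * (|Real.log s| ^ (1+β) / (-(1+β)))) := by
            rw [hh, ← ENNReal.ofReal_mul (by positivity)]
        _ ≤ ENNReal.ofReal (1/2 * (u s ^ 2 / s * |Real.log s| ^ β)
              + 2/(-(1+β))^2 * (s * deriv u s ^ 2 * |Real.log s| ^ (2+β))) := by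
            apply ENNReal.ofReal_le_ofReal
            have hamgm := hardy_amgm β hβ hs0 (hlogne s hsm) (u s) (deriv u s)
            calc 2 * |u s| * |deriv u s| * (|Real.log s| ^ (1+β) / (-(1+β)))
                = 2 * |u s| * |deriv u s| * |Real.log s| ^ (1+β) / (-(1+β)) := by ring
              _ ≤ _ := hamgm
        _ = ENNReal.ofReal (1/2) * F s + ENNReal.ofReal (2/(-(1+β))^2) * H s := by
            have e2 := ENNReal.ofReal_mul (p := 1/2)
              (q := u s ^ 2 / s * |Real.log s| ^ β) (by norm_num)
            have e3 := ENNReal.ofReal_mul (p := 2/(-(1+β))^2)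
              (q := s * deriv u s ^ 2 * |Real.log s| ^ (2+β)) (by positivity)
            rw [ENNReal.ofReal_add (by positivity) (by positivity), e2, e3, hF, hH]
    have step2' : ∫⁻ s in Set.Ioo ε 1, ∫⁻ r in Set.Ioo ε 1, ((Set.Ioi r).indicator h s) * g r ≤
        ENNReal.ofReal (1/2) * (∫⁻ s in Set.Ioo ε 1, F s)
          + ENNReal.ofReal (2/(-(1+β))^2) * ∫⁻ s in Set.Ioo ε 1, H s := by
      calc ∫⁻ s in Set.Ioo ε 1, ∫⁻ r in Set.Ioo ε 1, ((Set.Ioi r).indicator h s) * g r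
          ≤ ∫⁻ s in Set.Ioo ε 1,
            (ENNReal.ofReal (1/2) * F s + ENNReal.ofReal (2/(-(1+β))^2) * H s) :=
            lintegral_mono_ae ((ae_restrict_iff' measurableSet_Ioo).mpr (ae_of_all _ step2))
        _ = _ := by
            rw [lintegral_add_left' (hFmeas.const_mul _),
              lintegral_const_mul' _ _ ENNReal.ofReal_ne_top,
              lintegral_const_mul' _ _ ENNReal.ofReal_ne_top]
    have main : ∫⁻ r in Set.Ioo ε 1, F r ≤
        ENNReal.ofReal (1/2) * (∫⁻ r in Set.Ioo ε 1, F r)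
          + ENNReal.ofReal (2/(-(1+β))^2) * ∫⁻ s in Set.Ioo ε 1, H s :=
      step1'.trans (le_of_le_of_eq (le_of_eq hswap) rfl |>.trans step2')
    have hsplit2 : ∫⁻ r in Set.Ioo ε 1, F r
        = ENNReal.ofReal (1/2) * (∫⁻ r in Set.Ioo ε 1, F r)
          + ENNReal.ofReal (1/2) * (∫⁻ r in Set.Ioo ε 1, F r) := by
      rw [← add_mul, ← ENNReal.ofReal_add (by norm_num) (by norm_num)]
      norm_num
    have hhalf : ENNReal.ofReal (1/2) * (∫⁻ r in Set.Ioo ε 1, F r)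
        ≤ ENNReal.ofReal (2/(-(1+β))^2) * ∫⁻ s in Set.Ioo ε 1, H s := by
      have hmain2 := main
      nth_rewrite 1 [hsplit2] at hmain2
      exact (ENNReal.add_le_add_iff_left
        (ENNReal.mul_ne_top ENNReal.ofReal_ne_top hAfin)).mp hmain2
    calc ∫⁻ r in Set.Ioo ε 1, F r
        = ENNReal.ofReal 2 * (ENNReal.ofReal (1/2) * (∫⁻ r in Set.Ioo ε 1, F r)) := by
          rw [← mul_assoc, ← ENNReal.ofReal_mul (by norm_num)]
          norm_num
      _ ≤ ENNReal.ofReal 2 * (ENNReal.ofReal (2/(-(1+β))^2) * ∫⁻ s in Set.Ioo ε 1, H s) :=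
          mul_le_mul_right hhalf _
      _ = ENNReal.ofReal (4/(1+β)^2) * ∫⁻ s in Set.Ioo ε 1, H s := by
          rw [← mul_assoc, ← ENNReal.ofReal_mul (by norm_num)]
          congr 2
          rw [neg_sq]
          ring
      _ ≤ ENNReal.ofReal (4/(1+β)^2) * ∫⁻ s in Set.Ioi 0, H s :=
          mul_le_mul_right (lintegral_mono_set hsubε) _
  -- monotone convergence over ε = 1/(n+1)
  set φ : ℕ → ℝ → ℝ≥0∞ := fun n => (Set.Ioo (1/(n+1:ℝ)) 1).indicator F with hφ
  have hεpos : ∀ n : ℕ, (0:ℝ) < 1/(n+1) := fun n => by positivity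
  have hφmeas : ∀ n, AEMeasurable (φ n) volume := fun n =>
    (aemeasurable_indicator_iff measurableSet_Ioo).mpr (hFmeasOn _ (hεpos n))
  have hmono : ∀ᵐ x ∂(volume : Measure ℝ), Monotone (fun n => φ n x) := by
    apply ae_of_all
    intro x n k hnk
    apply Set.indicator_le_indicator_of_subset
    · apply Set.Ioo_subset_Ioo_left
      apply one_div_le_one_div_of_le (by positivity)
      exact_mod_cast add_le_add_left (Nat.cast_le.mpr hnk) 1
    · exact fun _ => zero_le
  have hsup : ∀ x, (⨆ n, φ n x) = (Set.Ioo (0:ℝ) 1).indicator F x := by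
    intro x
    by_cases hx : x ∈ Set.Ioo (0:ℝ) 1
    · obtain ⟨n, hn⟩ := exists_nat_one_div_lt hx.1
      rw [Set.indicator_of_mem hx]
      apply le_antisymm
      · exact iSup_le fun k => (Set.indicator_le_self _ _) x
      · refine le_iSup_of_le n ?_
        exact le_of_eq (Set.indicator_of_mem (Set.mem_Ioo.mpr ⟨hn, hx.2⟩) F).symm
    · rw [Set.indicator_of_notMem hx]
      refine ENNReal.iSup_eq_zero.mpr fun n => ?_
      exact Set.indicator_of_notMem
        (fun hmem => hx ⟨lt_trans (hεpos n) hmem.1, hmem.2⟩) _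
  calc ∫⁻ r in Set.Ioi (0:ℝ), F r = ∫⁻ r in Set.Ioo (0:ℝ) 1, F r := hred
    _ = ∫⁻ x, (Set.Ioo (0:ℝ) 1).indicator F x := (lintegral_indicator measurableSet_Ioo F).symm
    _ = ∫⁻ x, ⨆ n, φ n x := lintegral_congr (fun x => (hsup x).symm)
    _ = ⨆ n, ∫⁻ x, φ n x := lintegral_iSup' hφmeas hmono
    _ = ⨆ n : ℕ, ∫⁻ x in Set.Ioo (1/(n+1:ℝ)) 1, F x := by
        refine iSup_congr fun n => ?_
        exact lintegral_indicator measurableSet_Ioo F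
    _ ≤ ENNReal.ofReal (4/(1+β)^2) * ∫⁻ r in Set.Ioi 0, H r :=
        iSup_le fun n => hcore _ (hεpos n)

/-- **A one-dimensional weighted Hardy inequality with logarithmic weights.**
Let `β < -1` and let `u : (0,∞) → ℝ` be smooth, supported either in `(0,a]` for some
`a < 1` with `u(r)² |log r|^{1+β} → 0` as `r → 0⁺`, or compactly in `(1,∞)`. Then
`∫₀^∞ (u²/r) |log r|^β dr ≤ (4/(1+β)²) ∫₀^∞ r (u')² |log r|^{2+β} dr`, the inequality
being understood in `[0,∞]`. -/
theorem weighted_hardy_inequality_one_dimensional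
    (β : ℝ) (hβ : β < -1) (u : ℝ → ℝ) (hu : ContDiffOn ℝ (⊤ : ℕ∞) u (Set.Ioi 0))
    (hcase :
      (∃ a : ℝ, a < 1 ∧ Function.support u ⊆ Set.Ioc 0 a ∧
        Tendsto (fun r => u r ^ 2 * |Real.log r| ^ (1 + β)) (𝓝[>] 0) (𝓝 0)) ∨
      (IsCompact (tsupport u) ∧ tsupport u ⊆ Set.Ioi 1)) :
    (∫⁻ r in Set.Ioi (0 : ℝ), ENNReal.ofReal (u r ^ 2 / r * |Real.log r| ^ β))
      ≤ ENNReal.ofReal (4 / (1 + β) ^ 2) *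
        ∫⁻ r in Set.Ioi (0 : ℝ),
          ENNReal.ofReal (r * deriv u r ^ 2 * |Real.log r| ^ (2 + β)) := by
  rcases hcase with ⟨a, ha1, hsupp, _⟩ | ⟨hcomp, hts⟩
  · have ha0' : (0:ℝ) < max a (1/2) := lt_of_lt_of_le (by norm_num) (le_max_right _ _)
    have ha1' : max a (1/2) < 1 := max_lt ha1 (by norm_num)
    have hsupp' : Function.support u ⊆ Set.Ioc 0 (max a (1/2)) :=
      hsupp.trans (Set.Ioc_subset_Ioc_right (le_max_left _ _))
    exact hardy_case_a β hβ u hu ha0' ha1' hsupp'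
  · exact hardy_case_b β hβ u hu hcomp hts
end
end

section
/- Let f : ℝ⁴ → [0,∞) be given by f(θ₁,θ₂,θ₃,θ₄) = (θ₁² + θ₂² + θ₃²)(1 + θ₁² + θ₂² + θ₃²)(1 + θ₄²). Then for every α with −3/2 < α < −1, the function f^α is Lebesgue integrable on ℝ⁴, i.e. ∫_{ℝ⁴} f(θ)^α dθ < ∞. -/
/-!
The integrand factors as `g(θ₁, θ₂, θ₃) · (1 + θ₄²)^α` with `g x = (‖x‖² (1 + ‖x‖²))^α` radial
on `ℝ³`, so by Fubini it suffices to integrate the two factors separately. In polar coordinates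
`g` is integrable iff `r² (r² (1 + r²))^α` is integrable on `(0, ∞)`; this behaves like
`r^(2 + 2α)` at `0` and like `r^(2 + 4α)` at `∞`, hence is integrable for `-3/2 < α < -3/4`.
The factor `(1 + t²)^α` is integrable on `ℝ` as soon as `α < -1/2`.
-/

open MeasureTheory Set Real Module

lemma pow_mul_rpow_sq_mul_one_add_sq {n : ℕ} {α y : ℝ} (hy : 0 < y) :
    y ^ n * (y ^ 2 * (1 + y ^ 2)) ^ α = y ^ (n + 2 * α) * (1 + y ^ 2) ^ α := by
  rw [mul_rpow (by positivity) (by positivity), ← rpow_natCast y 2, ← rpow_mul hy.le,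
    ← rpow_natCast y n, ← mul_assoc, ← rpow_add hy]
  norm_num

lemma integrableOn_Ioi_pow_mul_rpow_sq_mul_one_add_sq {n : ℕ} {α : ℝ}
    (hα₁ : -((n + 1) / 2) < α) (hα₂ : α < -((n + 1) / 4)) :
    IntegrableOn (fun y : ℝ => y ^ n * (y ^ 2 * (1 + y ^ 2)) ^ α) (Ioi 0) := by
  have hα : α ≤ 0 := by linarith
  have hmeas : AEStronglyMeasurable (fun y : ℝ => y ^ n * (y ^ 2 * (1 + y ^ 2)) ^ α) := by
    fun_prop
  rw [← Ioc_union_Ioi_eq_Ioi zero_le_one]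
  refine .union ?_ ?_
  · have hdom : IntegrableOn (fun y : ℝ => y ^ (n + 2 * α)) (Ioc 0 1) := by
      rw [integrableOn_Ioc_iff_integrableOn_Ioo, intervalIntegral.integrableOn_Ioo_rpow_iff one_pos]
      linarith
    refine hdom.mono' hmeas.restrict (ae_restrict_of_forall_mem measurableSet_Ioc ?_)
    rintro y ⟨hy, -⟩
    rw [norm_of_nonneg (by positivity), pow_mul_rpow_sq_mul_one_add_sq hy]
    exact mul_le_of_le_one_right (by positivity)
      (rpow_le_one_of_one_le_of_nonpos (by nlinarith) hα)
  · have hdom : IntegrableOn (fun y : ℝ => y ^ (n + 4 * α)) (Ioi 1) :=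
      integrableOn_Ioi_rpow_of_lt (by linarith) one_pos
    refine hdom.mono' hmeas.restrict (ae_restrict_of_forall_mem measurableSet_Ioi ?_)
    intro y (hy : 1 < y)
    have hy₀ : 0 < y := one_pos.trans hy
    rw [norm_of_nonneg (by positivity), pow_mul_rpow_sq_mul_one_add_sq hy₀]
    calc y ^ (n + 2 * α) * (1 + y ^ 2) ^ α
        ≤ y ^ (n + 2 * α) * (y ^ 2) ^ α := by
          refine mul_le_mul_of_nonneg_left ?_ (by positivity)
          exact rpow_le_rpow_of_nonpos (pow_pos hy₀ 2) (le_add_of_nonneg_left zero_le_one) hα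
      _ = y ^ (n + 4 * α) := by
          rw [← rpow_natCast y 2, ← rpow_mul hy₀.le, ← rpow_add hy₀]
          ring_nf

lemma integrable_rpow_sq_norm_mul_one_add_sq_norm {E : Type*} [NormedAddCommGroup E]
    [NormedSpace ℝ E] [FiniteDimensional ℝ E] [Nontrivial E] [MeasurableSpace E] [BorelSpace E]
    (μ : Measure E) [μ.IsAddHaarMeasure] {α : ℝ}
    (hα₁ : -(finrank ℝ E / 2 : ℝ) < α) (hα₂ : α < -(finrank ℝ E / 4 : ℝ)) :
    Integrable (fun x : E => (‖x‖ ^ 2 * (1 + ‖x‖ ^ 2)) ^ α) μ := by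
  have hdim : ((finrank ℝ E - 1 : ℕ) : ℝ) + 1 = finrank ℝ E := by
    rw [Nat.cast_sub finrank_pos, Nat.cast_one, sub_add_cancel]
  refine (integrable_fun_norm_addHaar μ (f := fun y => (y ^ 2 * (1 + y ^ 2)) ^ α)).2 ?_
  exact integrableOn_Ioi_pow_mul_rpow_sq_mul_one_add_sq (by rwa [hdim]) (by rwa [hdim])

lemma integrable_one_add_sq_rpow {α : ℝ} (hα : α < -(1 / 2)) :
    Integrable (fun t : ℝ => (1 + t ^ 2) ^ α) := by
  have := integrable_rpow_neg_one_add_norm_sq (E := ℝ) (μ := volume) (r := -(2 * α))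
    (by rw [finrank_self]; push_cast; linarith)
  simpa [sq_abs, neg_div] using this

lemma integrable_mul_comp_init_last {n : ℕ} {g : EuclideanSpace ℝ (Fin n) → ℝ} {h : ℝ → ℝ}
    (hg : Integrable g) (hh : Integrable h) :
    Integrable (fun θ : EuclideanSpace ℝ (Fin (n + 1)) =>
      g (WithLp.toLp 2 (Fin.init θ)) * h (θ (Fin.last n))) := by
  have hg' : Integrable (g ∘ WithLp.toLp 2) (volume : Measure (Fin n → ℝ)) :=
    (EuclideanSpace.volume_preserving_symm_measurableEquiv_toLp (Fin n)).symm.integrable_comp_emb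
      (MeasurableEquiv.measurableEmbedding _) |>.2 hg
  have hprod := hh.mul_prod hg'
  have hpi := ((volume_preserving_piFinSuccAbove (fun _ : Fin (n + 1) => ℝ)
    (Fin.last n)).integrable_comp_emb (MeasurableEquiv.measurableEmbedding _)).2 hprod
  have hE := ((EuclideanSpace.volume_preserving_symm_measurableEquiv_toLp
    (Fin (n + 1))).integrable_comp_emb (MeasurableEquiv.measurableEmbedding _)).2 hpi
  refine hE.congr (ae_of_all _ fun θ => ?_)
  simp [mul_comm]

/-- **Integrable invariant density over a non-compact minimizer manifold
(Example `non-compact minimizer set`).** For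
`f(θ) = (θ₁²+θ₂²+θ₃²)(1+θ₁²+θ₂²+θ₃²)(1+θ₄²)` on `ℝ⁴` and every
`α ∈ (-3/2, -1)`, the function `f^α` is Lebesgue integrable on `ℝ⁴`. -/
theorem integrable_invariant_density_noncompact_minimizer
    (α : ℝ) (hα₁ : -(3 / 2 : ℝ) < α) (hα₂ : α < -1) :
    Integrable (fun θ : EuclideanSpace ℝ (Fin 4) =>
      ((θ 0 ^ 2 + θ 1 ^ 2 + θ 2 ^ 2) * (1 + θ 0 ^ 2 + θ 1 ^ 2 + θ 2 ^ 2) *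
        (1 + θ 3 ^ 2)) ^ α) := by
  have h₃ := integrable_rpow_sq_norm_mul_one_add_sq_norm (E := EuclideanSpace ℝ (Fin 3)) volume
    (α := α) (by rw [finrank_euclideanSpace_fin]; linarith)
    (by rw [finrank_euclideanSpace_fin]; linarith)
  have h₁ := integrable_one_add_sq_rpow (α := α) (by linarith)
  refine (integrable_mul_comp_init_last h₃ h₁).congr (ae_of_all _ fun θ => ?_)
  have hnorm : ‖WithLp.toLp 2 (Fin.init θ)‖ ^ 2 = θ 0 ^ 2 + θ 1 ^ 2 + θ 2 ^ 2 := by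
    simp [EuclideanSpace.norm_sq_eq, Fin.sum_univ_three, Fin.init]
  simp only [hnorm, show Fin.last 3 = 3 from rfl]
  rw [← mul_rpow (by positivity) (by positivity)]
  congr 1; ring
end

section
/- The complete elliptic integral ∫_0^{2π} ( cos²φ + ε sin²φ )^{−1/2} dφ satisfies the logarithmic asymptotics lim_{ε→0⁺} ( ∫_0^{2π} ( cos²φ + ε sin²φ )^{−1/2} dφ ) / |log ε| = 2. -/
/-!
By π-periodicity and evenness the integral is four times the integral over `[0, π/2]`. There
`cos φ ≤ π/2 - φ` bounds the integrand below by `1/(π/2 + √ε - φ)`, whose integral is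
`log (π/2 + √ε) - log √ε ≥ |log ε|/2`; above, it is at most `sec φ` on `[0, π/2 - √ε]`, which
integrates to `log (1 + cos √ε) - log (sin √ε) ≤ log π - log √ε` by Jordan's inequality, and at most
`1/√ε` on the remaining interval of length `√ε`. So the quarter integral is `|log ε|/2 + O(1)`.
-/

open MeasureTheory Filter Set Real
open scoped Topology

namespace Real

lemma sq_rpow_neg_half {A : ℝ} (hA : 0 ≤ A) : (A ^ 2) ^ (-(1 : ℝ) / 2) = A⁻¹ := by
  rw [← rpow_natCast, ← rpow_mul hA]
  norm_num [rpow_neg_one]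

lemma rpow_neg_half_le_inv {x A : ℝ} (hA : 0 < A) (h : A ^ 2 ≤ x) :
    x ^ (-(1 : ℝ) / 2) ≤ A⁻¹ :=
  sq_rpow_neg_half hA.le ▸ rpow_le_rpow_of_nonpos (by positivity) h (by norm_num)

lemma inv_le_rpow_neg_half {x A : ℝ} (hx : 0 < x) (hA : 0 ≤ A) (h : x ≤ A ^ 2) :
    A⁻¹ ≤ x ^ (-(1 : ℝ) / 2) :=
  sq_rpow_neg_half hA ▸ rpow_le_rpow_of_nonpos hx h (by norm_num)

lemma hasDerivAt_log_one_add_sin_sub_log_cos {x : ℝ} (hx : 0 < cos x) :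
    HasDerivAt (fun y => log (1 + sin y) - log (cos y)) (cos x)⁻¹ x := by
  have hsin : 0 < 1 + sin x := by nlinarith [sin_sq_add_cos_sq x, neg_one_le_sin x]
  refine (((hasDerivAt_sin x).const_add 1).log hsin.ne').sub
    ((hasDerivAt_cos x).log hx.ne') |>.congr_deriv ?_
  field_simp
  nlinarith [sin_sq_add_cos_sq x]

lemma integral_inv_cos {a b : ℝ} (ha : a ∈ Ioo (-(π / 2)) (π / 2))
    (hb : b ∈ Ioo (-(π / 2)) (π / 2)) :
    ∫ x in a..b, (cos x)⁻¹ =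
      (log (1 + sin b) - log (cos b)) - (log (1 + sin a) - log (cos a)) := by
  have hcos : ∀ x ∈ uIcc a b, 0 < cos x := fun x hx =>
    cos_pos_of_mem_Ioo (ordConnected_Ioo.uIcc_subset ha hb hx)
  refine intervalIntegral.integral_eq_sub_of_hasDerivAt
    (fun x hx => hasDerivAt_log_one_add_sin_sub_log_cos (hcos x hx)) ?_
  exact (continuousOn_cos.inv₀ fun x hx => (hcos x hx).ne').intervalIntegrable

end Real

lemma Function.Periodic.integral_zero_two_mul_eq_four_mul {f : ℝ → ℝ} {T : ℝ}
    (hf : Continuous f) (hper : Function.Periodic f T) (heven : ∀ x, f (-x) = f x) :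
    ∫ x in 0..2 * T, f x = 4 * ∫ x in 0..T / 2, f x := by
  have hint : ∀ a b, IntervalIntegrable f volume a b := hf.intervalIntegrable
  have hreflect : ∫ x in T / 2..T, f x = ∫ x in 0..T / 2, f x := by
    have := intervalIntegral.integral_comp_sub_left f T (a := 0) (b := T / 2)
    rw [sub_zero, sub_half] at this
    rw [← this]
    congr 1 with x
    rw [← heven, neg_sub, hper.sub_eq]
  have hperiod := hper.intervalIntegral_add_zsmul_eq 2 0 hint
  simp only [zero_add, two_zsmul, ← two_mul] at hperiod
  rw [hperiod, ← intervalIntegral.integral_add_adjacent_intervals (hint 0 (T / 2)) (hint _ T),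
    hreflect]
  ring

lemma tendsto_div_of_le_of_le_add {α : Type*} {l : Filter α} {g L : α → ℝ} {c C : ℝ}
    (hL : Tendsto L l atTop) (hlow : ∀ᶠ x in l, c * L x ≤ g x)
    (hup : ∀ᶠ x in l, g x ≤ c * L x + C) :
    Tendsto (fun x => g x / L x) l (𝓝 c) := by
  have hupper : Tendsto (fun x => c + C / L x) l (𝓝 c) := by
    simpa using (tendsto_const_nhds.div_atTop hL).const_add c
  refine tendsto_of_tendsto_of_tendsto_of_le_of_le' tendsto_const_nhds hupper ?_ ?_ <;>
    filter_upwards [hL.eventually_gt_atTop 0, hlow, hup] with x hLx hlowx hupx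
  · rwa [le_div_iff₀ hLx]
  · rw [div_le_iff₀ hLx, add_mul, div_mul_cancel₀ _ hLx.ne']
    linarith

noncomputable def ellipticIntegrand (ε φ : ℝ) : ℝ := (cos φ ^ 2 + ε * sin φ ^ 2) ^ (-(1 : ℝ) / 2)

section ellipticIntegrand

variable {ε : ℝ}

lemma cos_sq_add_mul_sin_sq_pos (hε : 0 < ε) (φ : ℝ) : 0 < cos φ ^ 2 + ε * sin φ ^ 2 := by
  rcases eq_or_ne (cos φ) 0 with hcos | hcos
  · have : sin φ ^ 2 = 1 := by nlinarith [sin_sq_add_cos_sq φ]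
    simp [hcos, this, hε]
  · positivity

lemma continuous_ellipticIntegrand (hε : 0 < ε) : Continuous (ellipticIntegrand ε) :=
  (by fun_prop : Continuous fun φ => cos φ ^ 2 + ε * sin φ ^ 2).rpow_const
    fun φ => .inl (cos_sq_add_mul_sin_sq_pos hε φ).ne'

lemma ellipticIntegrand_periodic : Function.Periodic (ellipticIntegrand ε) π := fun φ => by
  simp [ellipticIntegrand, cos_add_pi, sin_add_pi]

lemma ellipticIntegrand_neg (φ : ℝ) : ellipticIntegrand ε (-φ) = ellipticIntegrand ε φ := by
  simp [ellipticIntegrand]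

lemma inv_le_ellipticIntegrand (hε : 0 < ε) {φ : ℝ} (hφ : φ ∈ Icc 0 (π / 2)) :
    (π / 2 + √ε - φ)⁻¹ ≤ ellipticIntegrand ε φ := by
  have hcos : cos φ ≤ π / 2 - φ := by
    simpa [sin_pi_div_two_sub] using sin_le (x := π / 2 - φ) (by linarith [hφ.2])
  have hcos0 : 0 ≤ cos φ := cos_nonneg_of_mem_Icc ⟨by linarith [hφ.1, pi_pos], hφ.2⟩
  have hsin : ε * sin φ ^ 2 ≤ √ε ^ 2 := by
    rw [sq_sqrt hε.le]
    nlinarith [sin_sq_le_one φ]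
  refine inv_le_rpow_neg_half (cos_sq_add_mul_sin_sq_pos hε φ) ?_ ?_
  · linarith [hφ.2, sqrt_nonneg ε]
  · nlinarith [sqrt_nonneg ε]

lemma ellipticIntegrand_le_inv_cos (hε : 0 ≤ ε) {φ : ℝ} (hφ : 0 < cos φ) :
    ellipticIntegrand ε φ ≤ (cos φ)⁻¹ :=
  rpow_neg_half_le_inv hφ (by nlinarith [sq_nonneg (sin φ)])

lemma ellipticIntegrand_le_inv_sqrt (hε : 0 < ε) (hε1 : ε ≤ 1) (φ : ℝ) :
    ellipticIntegrand ε φ ≤ (√ε)⁻¹ :=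
  rpow_neg_half_le_inv (sqrt_pos.2 hε) <| by
    rw [sq_sqrt hε.le]
    nlinarith [sin_sq_add_cos_sq φ, sq_nonneg (cos φ)]

lemma neg_log_div_two_le_integral_ellipticIntegrand (hε : 0 < ε) :
    -log ε / 2 ≤ ∫ φ in 0..π / 2, ellipticIntegrand ε φ := by
  have hs : 0 < √ε := sqrt_pos.2 hε
  have hint : ∫ φ in 0..π / 2, (π / 2 + √ε - φ)⁻¹ = log (π / 2 + √ε) - log √ε := by
    rw [intervalIntegral.integral_comp_sub_left (fun x => x⁻¹), add_sub_cancel_left, sub_zero,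
      integral_inv_of_pos hs (by positivity), log_div (by positivity) hs.ne']
  have hintegrable : IntervalIntegrable (fun φ => (π / 2 + √ε - φ)⁻¹) volume 0 (π / 2) := by
    refine ContinuousOn.intervalIntegrable (ContinuousOn.inv₀ (by fun_prop) fun x hx => ?_)
    rw [uIcc_of_le (by positivity)] at hx
    linarith [hx.2]
  have hmono := intervalIntegral.integral_mono_on (by positivity) hintegrable
    ((continuous_ellipticIntegrand hε).intervalIntegrable _ _)
    fun φ hφ => inv_le_ellipticIntegrand hε hφ
  rw [hint, log_sqrt hε.le] at hmono
  linarith [log_nonneg (by linarith [pi_gt_three] : (1 : ℝ) ≤ π / 2 + √ε)]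

lemma integral_ellipticIntegrand_le (hε : 0 < ε) (hε1 : ε < 1) :
    ∫ φ in 0..π / 2, ellipticIntegrand ε φ ≤ -log ε / 2 + log π + 1 := by
  set s := √ε
  have hs : 0 < s := sqrt_pos.2 hε
  have hs1 : s < 1 := (sqrt_lt' one_pos).2 (by simpa using hε1)
  have hπ := pi_gt_three
  have hf := (continuous_ellipticIntegrand hε).intervalIntegrable (μ := volume)
  have hcos : ∀ x ∈ Icc 0 (π / 2 - s), 0 < cos x := fun x hx =>
    cos_pos_of_mem_Ioo ⟨by linarith [hx.1], by linarith [hx.2]⟩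
  have hnear : ∫ φ in 0..π / 2 - s, ellipticIntegrand ε φ ≤ log π - log s := by
    have hb : π / 2 - s ∈ Ioo (-(π / 2)) (π / 2) := ⟨by linarith, by linarith⟩
    have hsec : IntervalIntegrable (fun x => (cos x)⁻¹) volume 0 (π / 2 - s) :=
      (continuousOn_cos.inv₀ fun x hx => (hcos x hx).ne').intervalIntegrable_of_Icc (by linarith)
    have hmono := intervalIntegral.integral_mono_on (by linarith) (hf _ _) hsec
      fun φ hφ => ellipticIntegrand_le_inv_cos hε.le (hcos φ hφ)
    rw [integral_inv_cos ⟨by linarith, by linarith⟩ hb, cos_pi_div_two_sub] at hmono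
    have hlog1 : log (1 + sin (π / 2 - s)) ≤ log 2 := by
      rw [sin_pi_div_two_sub]
      exact log_le_log (by linarith [cos_pos_of_mem_Ioo (x := s) ⟨by linarith, by linarith⟩])
        (by linarith [cos_le_one s])
    have hlog2 : log (2 / π * s) ≤ log (sin s) := log_le_log (by positivity) (mul_le_sin hs.le (by linarith))
    rw [log_mul (by positivity) hs.ne', log_div two_ne_zero (by positivity)] at hlog2
    simp only [sin_zero, add_zero, cos_zero, log_one, sub_zero] at hmono
    linarith
  have hfar : ∫ φ in π / 2 - s..π / 2, ellipticIntegrand ε φ ≤ 1 := by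
    have hmono := intervalIntegral.integral_mono_on (a := π / 2 - s) (b := π / 2) (by linarith)
      (hf _ _) intervalIntegrable_const fun φ _ => ellipticIntegrand_le_inv_sqrt hε hε1.le φ
    rwa [intervalIntegral.integral_const, smul_eq_mul, sub_sub_cancel, mul_inv_cancel₀ hs.ne']
      at hmono
  rw [← intervalIntegral.integral_add_adjacent_intervals (hf 0 (π / 2 - s)) (hf _ _)]
  have : log s = log ε / 2 := log_sqrt hε.le
  linarith

lemma setIntegral_Ioo_ellipticIntegrand (hε : 0 < ε) :
    ∫ φ in Ioo 0 (2 * π), ellipticIntegrand ε φ = 4 * ∫ φ in 0..π / 2, ellipticIntegrand ε φ := by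
  rw [← integral_Ioc_eq_integral_Ioo, ← intervalIntegral.integral_of_le (by positivity)]
  exact ellipticIntegrand_periodic.integral_zero_two_mul_eq_four_mul
    (continuous_ellipticIntegrand hε) ellipticIntegrand_neg

end ellipticIntegrand

/-- **Logarithmic asymptotics of the complete elliptic integral of the first kind.**
`lim_{ε→0⁺} (∫₀^{2π} (cos²φ + ε sin²φ)^{-1/2} dφ) / |log ε| = 2`. -/
theorem elliptic_integral_log_asymptotics :
    Tendsto (fun ε : ℝ =>
        (∫ φ in Set.Ioo (0 : ℝ) (2 * Real.pi),
          (Real.cos φ ^ 2 + ε * Real.sin φ ^ 2) ^ (-(1 : ℝ) / 2)) / |Real.log ε|)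
      (𝓝[>] 0) (𝓝 2) := by
  have hlog : Tendsto (fun ε => |log ε|) (𝓝[>] 0) atTop :=
    tendsto_abs_atBot_atTop.comp tendsto_log_nhdsGT_zero
  refine tendsto_div_of_le_of_le_add (C := 4 * (log π + 1))
    (g := fun ε => ∫ φ in Ioo 0 (2 * π), ellipticIntegrand ε φ) hlog ?_ ?_ <;>
  filter_upwards [Ioo_mem_nhdsGT one_pos] with ε ⟨hε, hε1⟩ <;>
  rw [setIntegral_Ioo_ellipticIntegrand hε, abs_of_neg (log_neg hε hε1)]
  · linarith [neg_log_div_two_le_integral_ellipticIntegrand hε]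
  · linarith [integral_ellipticIntegrand_le hε hε1]
end

section
/- Let m ≥ 1 and let f : ℝ^m → [0,∞) be a C² function such that f(θ̄) = 0 for some θ̄ ∈ ℝ^m, and such that there exist c₁, γ, R > 0 with f(θ) ≥ c₁|θ|^γ whenever |θ| ≥ R. Then for every η > 0 the function exp(−f/η) is Lebesgue integrable on ℝ^m with ∫_{ℝ^m} exp(−f(θ)/η) dθ > 0, and for every ε > 0, lim_{η→0⁺} ( ∫_{{θ : f(θ) ≥ ε}} exp(−f(θ)/η) dθ ) / ( ∫_{ℝ^m} exp(−f(θ)/η) dθ ) = 0; that is, the Gibbs probability measures with densities proportional to exp(−f/η) concentrate on the sublevel sets {f < ε} as η → 0. -/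
/-!
Compare the Gibbs density at temperature `η ≤ 1` with the one at `η = 1`: on `{f ≥ ε}`,
`e^{-f/η} ≤ e^{ε - ε/η} e^{-f}`, so the numerator is at most `e^{ε - ε/η} Z(1)`. By continuity,
`f ≤ ε/2` on a ball around the zero `θbar`, of volume `V > 0`, so the partition function is at
least `e^{-ε/(2η)} V`. Hence the ratio is `O(e^{-ε/(2η)})`. Integrability follows from the
domination `e^{-f/η} ≤ C e^{-(c₁/η)|θ|^γ}`, whose right side is integrable by polar coordinates.
-/

open MeasureTheory Filter Metric Set Real
open scoped Topology ENNReal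

theorem tendsto_exp_neg_div_nhdsGT_zero {c : ℝ} (hc : 0 < c) :
    Tendsto (fun η : ℝ => exp (-c / η)) (𝓝[>] 0) (𝓝 0) := by
  have h : Tendsto (fun η : ℝ => -c / η) (𝓝[>] 0) atBot := by
    simpa only [div_eq_mul_inv] using
      tendsto_inv_nhdsGT_zero.const_mul_atTop_of_neg (neg_lt_zero.2 hc)
  exact tendsto_exp_atBot.comp h

section GibbsMeasure

variable {α : Type*} [MeasurableSpace α] {μ : Measure α} {f : α → ℝ} {s : Set α} {a ε η : ℝ}

theorem exp_neg_div_mul_measureReal_le_integral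
    (hint : Integrable (fun x => exp (-f x / η)) μ) (hη : 0 < η) (hs : MeasurableSet s)
    (hμs : μ s ≠ ∞) (hfs : ∀ x ∈ s, f x ≤ a) :
    exp (-a / η) * μ.real s ≤ ∫ x, exp (-f x / η) ∂μ :=
  (setIntegral_ge_of_const_le_real hs hμs
      (fun x hx => exp_le_exp.2 (by gcongr; exact hfs x hx)) hint.integrableOn).trans
    (setIntegral_le_integral hint (.of_forall fun _ => (exp_pos _).le))

theorem setIntegral_superlevel_exp_neg_div_le (hf : Measurable f)
    (hint : Integrable (fun x => exp (-f x)) μ) (hη : 0 < η) (hη1 : η ≤ 1) :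
    ∫ x in {x | ε ≤ f x}, exp (-f x / η) ∂μ ≤ exp (ε - ε / η) * ∫ x, exp (-f x) ∂μ := by
  have hpointwise : ∀ x ∈ {x | ε ≤ f x}, exp (-f x / η) ≤ exp (ε - ε / η) * exp (-f x) := by
    intro x hx
    have h := mul_nonneg (sub_nonneg.2 (show ε ≤ f x from hx))
      (sub_nonneg.2 ((one_le_inv₀ hη).2 hη1))
    rw [← exp_add]
    exact exp_le_exp.2 (by simp only [div_eq_mul_inv]; linarith)
  calc ∫ x in {x | ε ≤ f x}, exp (-f x / η) ∂μ
      ≤ ∫ x in {x | ε ≤ f x}, exp (ε - ε / η) * exp (-f x) ∂μ :=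
        integral_mono_of_nonneg (.of_forall fun _ => (exp_pos _).le)
          (hint.const_mul _).integrableOn
          (ae_restrict_of_forall_mem (measurableSet_le measurable_const hf) hpointwise)
    _ = exp (ε - ε / η) * ∫ x in {x | ε ≤ f x}, exp (-f x) ∂μ := integral_const_mul _ _
    _ ≤ exp (ε - ε / η) * ∫ x, exp (-f x) ∂μ :=
        mul_le_mul_of_nonneg_left
          (setIntegral_le_integral hint (.of_forall fun _ => (exp_pos _).le)) (exp_pos _).le

theorem tendsto_setIntegral_superlevel_div_integral_exp_neg (hf : Measurable f)
    (hint : ∀ η, 0 < η → Integrable (fun x => exp (-f x / η)) μ) (hs : MeasurableSet s)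
    (hμs₀ : μ s ≠ 0) (hμs : μ s ≠ ∞) (hfs : ∀ x ∈ s, f x ≤ a) (haε : a < ε) :
    Tendsto (fun η => (∫ x in {x | ε ≤ f x}, exp (-f x / η) ∂μ) / ∫ x, exp (-f x / η) ∂μ)
      (𝓝[>] 0) (𝓝 0) := by
  have hint₁ : Integrable (fun x => exp (-f x)) μ := by simpa only [div_one] using hint 1 one_pos
  set Z := ∫ x, exp (-f x) ∂μ
  have hV : 0 < μ.real s := ENNReal.toReal_pos hμs₀ hμs
  have hbound : ∀ η ∈ Ioc (0 : ℝ) 1,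
      (∫ x in {x | ε ≤ f x}, exp (-f x / η) ∂μ) / ∫ x, exp (-f x / η) ∂μ ≤
        exp ε * Z / μ.real s * exp (-(ε - a) / η) := by
    rintro η ⟨hη, hη1⟩
    calc (∫ x in {x | ε ≤ f x}, exp (-f x / η) ∂μ) / ∫ x, exp (-f x / η) ∂μ
        ≤ exp (ε - ε / η) * Z / (exp (-a / η) * μ.real s) :=
          div_le_div₀ (by positivity) (setIntegral_superlevel_exp_neg_div_le hf hint₁ hη hη1)
            (by positivity) (exp_neg_div_mul_measureReal_le_integral (hint η hη) hη hs hμs hfs)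
      _ = exp ε * Z / μ.real s * exp (-(ε - a) / η) := by
          have hsplit : exp (ε - ε / η) = exp ε * exp (-(ε - a) / η) * exp (-a / η) := by
            rw [← exp_add, ← exp_add]
            ring_nf
          rw [hsplit]
          field_simp
  refine squeeze_zero' (g := fun η => exp ε * Z / μ.real s * exp (-(ε - a) / η))
    (.of_forall fun η => div_nonneg (integral_nonneg fun _ => (exp_pos _).le)
      (integral_nonneg fun _ => (exp_pos _).le))
    (eventually_of_mem (Ioc_mem_nhdsGT zero_lt_one) hbound) ?_
  simpa only [mul_zero] using
    (tendsto_exp_neg_div_nhdsGT_zero (sub_pos.2 haε)).const_mul (exp ε * Z / μ.real s)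

end GibbsMeasure

section GrowthAtInfinity

variable {E : Type*} [NormedAddCommGroup E] [NormedSpace ℝ E] [FiniteDimensional ℝ E]
  [MeasurableSpace E] [BorelSpace E] (μ : Measure E) [μ.IsAddHaarMeasure]

theorem integrable_exp_neg_mul_norm_rpow {b p : ℝ} (hb : 0 < b) (hp : 0 < p) :
    Integrable (fun x => exp (-b * ‖x‖ ^ p)) μ := by
  rcases subsingleton_or_nontrivial E with hE | hE
  · convert integrable_const (μ := μ) (exp (-b * ‖(0 : E)‖ ^ p)) using 1
    ext x
    rw [Subsingleton.elim x 0]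
  · rw [integrable_fun_norm_addHaar μ (f := fun y => exp (-b * y ^ p))]
    have hd : (-1 : ℝ) < (Module.finrank ℝ E - 1 : ℕ) :=
      neg_one_lt_zero.trans_le (Nat.cast_nonneg _)
    refine (integrableOn_rpow_mul_exp_neg_mul_rpow hd hp hb).congr_fun (fun y _ => ?_)
      measurableSet_Ioi
    simp only [rpow_natCast, smul_eq_mul]

theorem integrable_exp_neg_of_growth {g : E → ℝ} {c γ R : ℝ} (hg : AEStronglyMeasurable g μ)
    (hg₀ : ∀ x, 0 ≤ g x) (hc : 0 < c) (hγ : 0 < γ)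
    (hgrow : ∀ x, R ≤ ‖x‖ → c * ‖x‖ ^ γ ≤ g x) :
    Integrable (fun x => exp (-g x)) μ := by
  have hbound : ∀ x, -g x ≤ c * |R| ^ γ + -c * ‖x‖ ^ γ := by
    intro x
    rcases le_or_gt R ‖x‖ with hx | hx
    · nlinarith [hgrow x hx, rpow_nonneg (abs_nonneg R) γ]
    · have : ‖x‖ ^ γ ≤ |R| ^ γ :=
        rpow_le_rpow (norm_nonneg x) (hx.le.trans (le_abs_self R)) hγ.le
      nlinarith [hg₀ x]
  refine ((integrable_exp_neg_mul_norm_rpow μ hc hγ).const_mul (exp (c * |R| ^ γ))).mono'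
    (continuous_exp.comp_aestronglyMeasurable hg.neg) (.of_forall fun x => ?_)
  rw [norm_of_nonneg (exp_pos _).le, ← exp_add]
  exact exp_le_exp.2 (hbound x)

end GrowthAtInfinity

theorem gibbs_measures_concentrate_on_minima_general
    (m : ℕ)
    (f : EuclideanSpace ℝ (Fin m) → ℝ) (hf0 : ∀ θ, 0 ≤ f θ) (hf : ContDiff ℝ 2 f)
    (θbar : EuclideanSpace ℝ (Fin m)) (hθbar : f θbar = 0)
    (c₁ γ R : ℝ) (hc₁ : 0 < c₁) (hγ : 0 < γ)
    (hgrow : ∀ θ : EuclideanSpace ℝ (Fin m), R ≤ ‖θ‖ → c₁ * ‖θ‖ ^ γ ≤ f θ) :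
    (∀ η : ℝ, 0 < η →
      Integrable (fun θ => Real.exp (-f θ / η)) ∧
      0 < ∫ θ, Real.exp (-f θ / η)) ∧
    ∀ ε : ℝ, 0 < ε →
      Tendsto (fun η : ℝ =>
          (∫ θ in {θ | ε ≤ f θ}, Real.exp (-f θ / η)) / ∫ θ, Real.exp (-f θ / η))
        (𝓝[>] 0) (𝓝 0) := by
  have hcont : Continuous f := hf.continuous
  have hint : ∀ η : ℝ, 0 < η → Integrable (fun θ => exp (-f θ / η)) := fun η hη => by
    simpa only [neg_div] using integrable_exp_neg_of_growth volume
      (hcont.div_const η).aestronglyMeasurable (fun θ => div_nonneg (hf0 θ) hη.le)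
      (div_pos hc₁ hη) hγ (fun θ hθ => by rw [div_mul_eq_mul_div]; gcongr; exact hgrow θ hθ)
  refine ⟨fun η hη => ⟨hint η hη, integral_exp_pos (hint η hη)⟩, fun ε hε => ?_⟩
  obtain ⟨δ, hδ, hball⟩ : ∃ δ > 0, ∀ θ ∈ ball θbar δ, f θ ≤ ε / 2 :=
    eventually_nhds_iff_ball.mp
      (hcont.continuousAt.eventually (ge_mem_nhds (by rw [hθbar]; positivity)))
  exact tendsto_setIntegral_superlevel_div_integral_exp_neg hcont.measurable hint
    measurableSet_ball (measure_ball_pos volume θbar hδ).ne' measure_ball_lt_top.ne hball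
    (half_lt_self hε)

/-- **Concentration of Gibbs measures on low sublevel sets.** Let `f ≥ 0` be `C²`,
vanishing somewhere, with `f(θ) ≥ c₁|θ|^γ` for `|θ| ≥ R`. Then for every `η > 0` the
Boltzmann density `exp(-f/η)` is integrable with positive total mass, and for every
`ε > 0` the Gibbs measures concentrate on `{f < ε}` as `η → 0⁺`:
`(∫_{f ≥ ε} e^{-f/η}) / (∫ e^{-f/η}) → 0`. -/
theorem gibbs_measures_concentrate_on_minima
    (m : ℕ) (hm : 1 ≤ m)
    (f : EuclideanSpace ℝ (Fin m) → ℝ) (hf0 : ∀ θ, 0 ≤ f θ) (hf : ContDiff ℝ 2 f)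
    (θbar : EuclideanSpace ℝ (Fin m)) (hθbar : f θbar = 0)
    (c₁ γ R : ℝ) (hc₁ : 0 < c₁) (hγ : 0 < γ) (hR : 0 < R)
    (hgrow : ∀ θ : EuclideanSpace ℝ (Fin m), R ≤ ‖θ‖ → c₁ * ‖θ‖ ^ γ ≤ f θ) :
    (∀ η : ℝ, 0 < η →
      Integrable (fun θ => Real.exp (-f θ / η)) ∧
      0 < ∫ θ, Real.exp (-f θ / η)) ∧
    ∀ ε : ℝ, 0 < ε →
      Tendsto (fun η : ℝ =>
          (∫ θ in {θ | ε ≤ f θ}, Real.exp (-f θ / η)) / ∫ θ, Real.exp (-f θ / η))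
        (𝓝[>] 0) (𝓝 0) :=
  gibbs_measures_concentrate_on_minima_general m f hf0 hf θbar hθbar c₁ γ R hc₁ hγ hgrow
end

section
/- Let m ≥ 1 and let f : ℝ^m → (0,∞) be a continuous function with ε := inf_θ f(θ) > 0, and suppose there exist c₁, κ, R > 0 with f(θ) ≥ c₁|θ|^κ whenever |θ| ≥ R and c₁ R^κ ≥ 2ε. Then for every α < −m/κ the function f^α is Lebesgue integrable on ℝ^m with ∫_{ℝ^m} f^α dθ > 0, and for every μ ∈ (0,2), lim_{α→−∞} ( ∫_{{θ : f(θ) ≥ (1+μ)ε}} f(θ)^α dθ ) / ( ∫_{ℝ^m} f(θ)^α dθ ) = 0; that is, the probability measures with densities proportional to f^α concentrate on the sublevel sets {f < (1+μ)ε} as α → −∞. -/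
open MeasureTheory Filter Metric Set
open scoped Topology ENNReal

/-!
Because `f ≥ ε > 0` and `f` grows like `‖θ‖^κ`, one has `f θ ≥ c (1 + ‖θ‖)^κ` everywhere, so `f^α`
is dominated by a multiple of `(1 + ‖θ‖)^(κα)`, which is integrable once `κα < -m`.
For the concentration, fix `α₀ < -m/κ` and `ε < b < a = (1+μ)ε` with `f < b` on some ball `U`.
On `{f ≥ a}` we have `f^α ≤ a^(α-α₀) f^α₀`, while `U` contributes at least `b^α |U|` to the
total mass, so the ratio is `O((a/b)^α)`, which tends to `0` as `α → -∞`.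
-/

theorem Real.rpow_le_rpow_sub_mul_rpow {a y α α₀ : ℝ} (ha : 0 < a) (hay : a ≤ y) (hα : α ≤ α₀) :
    y ^ α ≤ a ^ (α - α₀) * y ^ α₀ := by
  have hy : 0 < y := ha.trans_le hay
  calc y ^ α = y ^ (α - α₀) * y ^ α₀ := by rw [← Real.rpow_add hy, sub_add_cancel]
    _ ≤ a ^ (α - α₀) * y ^ α₀ := mul_le_mul_of_nonneg_right
      (Real.rpow_le_rpow_of_nonpos ha hay (sub_nonpos.mpr hα)) (Real.rpow_nonneg hy.le α₀)

theorem exists_pos_mul_one_add_norm_rpow_le {E : Type*} [SeminormedAddCommGroup E] {f : E → ℝ}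
    {ε c₁ κ R : ℝ} (hε : 0 < ε) (hlb : ∀ x, ε ≤ f x) (hc₁ : 0 < c₁) (hκ : 0 ≤ κ)
    (hgrow : ∀ x, R ≤ ‖x‖ → c₁ * ‖x‖ ^ κ ≤ f x) :
    ∃ c > 0, ∀ x, c * (1 + ‖x‖) ^ κ ≤ f x := by
  set R' := max R 1
  refine ⟨min (c₁ / 2 ^ κ) (ε / (1 + R') ^ κ), by positivity, fun x => ?_⟩
  rcases le_total R' ‖x‖ with hx | hx
  · have h1 : 1 ≤ ‖x‖ := (le_max_right R 1).trans hx
    calc min (c₁ / 2 ^ κ) (ε / (1 + R') ^ κ) * (1 + ‖x‖) ^ κ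
        ≤ c₁ / 2 ^ κ * (2 * ‖x‖) ^ κ := by gcongr; exacts [min_le_left _ _, by linarith]
      _ = c₁ * ‖x‖ ^ κ := by
        rw [Real.mul_rpow zero_le_two (norm_nonneg x)]; field_simp
      _ ≤ f x := hgrow x ((le_max_left R 1).trans hx)
  · calc min (c₁ / 2 ^ κ) (ε / (1 + R') ^ κ) * (1 + ‖x‖) ^ κ
        ≤ ε / (1 + R') ^ κ * (1 + R') ^ κ := by gcongr; exact min_le_right _ _
      _ = ε := div_mul_cancel₀ ε (by positivity)
      _ ≤ f x := hlb x

theorem integrable_rpow_of_mul_one_add_norm_rpow_le {E : Type*} [NormedAddCommGroup E]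
    [NormedSpace ℝ E] [FiniteDimensional ℝ E] [MeasurableSpace E] [BorelSpace E] {μ : Measure E}
    [μ.IsAddHaarMeasure] {f : E → ℝ} (hf : AEMeasurable f μ) {c κ α : ℝ} (hc : 0 < c)
    (hbound : ∀ x, c * (1 + ‖x‖) ^ κ ≤ f x) (hα : α ≤ 0) (hκα : κ * α < -Module.finrank ℝ E) :
    Integrable (fun x => f x ^ α) μ := by
  have hdom : Integrable (fun x => c ^ α * (1 + ‖x‖) ^ (κ * α)) μ := by
    simpa using (integrable_one_add_norm (μ := μ) (r := -(κ * α)) (by linarith)).const_mul (c ^ α)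
  refine hdom.mono' (hf.pow_const α).aestronglyMeasurable (ae_of_all _ fun x => ?_)
  have hx : 0 < c * (1 + ‖x‖) ^ κ := by positivity
  calc ‖f x ^ α‖ = f x ^ α := Real.norm_of_nonneg (Real.rpow_nonneg (hx.trans_le (hbound x)).le α)
    _ ≤ (c * (1 + ‖x‖) ^ κ) ^ α := Real.rpow_le_rpow_of_nonpos hx (hbound x) hα
    _ = c ^ α * (1 + ‖x‖) ^ (κ * α) := by
      rw [Real.mul_rpow hc.le (by positivity), ← Real.rpow_mul (by positivity)]

section Concentration

variable {X : Type*} [MeasurableSpace X] {μ : Measure X} {f : X → ℝ}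

theorem setIntegral_rpow_le_rpow_sub_mul {a α α₀ : ℝ} (ha : 0 < a) (hα : α ≤ α₀)
    (hS : MeasurableSet {x | a ≤ f x}) (hint : IntegrableOn (fun x => f x ^ α₀) {x | a ≤ f x} μ) :
    ∫ x in {x | a ≤ f x}, f x ^ α ∂μ ≤ a ^ (α - α₀) * ∫ x in {x | a ≤ f x}, f x ^ α₀ ∂μ := by
  rw [← integral_const_mul]
  refine integral_mono_of_nonneg (ae_restrict_of_forall_mem hS fun x hx => ?_)
    (Integrable.const_mul hint _) (ae_restrict_of_forall_mem hS fun x hx =>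
      Real.rpow_le_rpow_sub_mul_rpow ha hx hα)
  exact Real.rpow_nonneg (ha.trans_le hx).le α

theorem rpow_mul_measureReal_le_integral_rpow {U : Set X} {b α : ℝ} (hpos : ∀ x, 0 < f x)
    (hα : α ≤ 0) (hint : Integrable (fun x => f x ^ α) μ) (hU : MeasurableSet U) (hUμ : μ U ≠ ∞)
    (hUf : ∀ x ∈ U, f x ≤ b) :
    b ^ α * μ.real U ≤ ∫ x, f x ^ α ∂μ :=
  (setIntegral_ge_of_const_le_real hU hUμ
    (fun x hx => Real.rpow_le_rpow_of_nonpos (hpos x) (hUf x hx) hα) hint.integrableOn).trans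
    (setIntegral_le_integral hint (ae_of_all _ fun x => Real.rpow_nonneg (hpos x).le α))

theorem tendsto_setIntegral_rpow_div_integral_rpow_atBot {U : Set X} {a b α₀ : ℝ}
    (hf : Measurable f) (hpos : ∀ x, 0 < f x) (hba : b < a) (hU : MeasurableSet U)
    (hUμ : μ U ≠ ∞) (hU0 : μ U ≠ 0) (hUf : ∀ x ∈ U, f x ≤ b)
    (hint : ∀ α ≤ α₀, Integrable (fun x => f x ^ α) μ) :
    Tendsto (fun α : ℝ => (∫ x in {x | a ≤ f x}, f x ^ α ∂μ) / ∫ x, f x ^ α ∂μ) atBot (𝓝 0) := by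
  obtain ⟨x₀, hx₀⟩ := nonempty_of_measure_ne_zero hU0
  have hb : 0 < b := (hpos x₀).trans_le (hUf x₀ hx₀)
  have ha : 0 < a := hb.trans hba
  have hS : MeasurableSet {x | a ≤ f x} := measurableSet_le measurable_const hf
  set C := ∫ x in {x | a ≤ f x}, f x ^ α₀ ∂μ
  have hC : 0 ≤ C := integral_nonneg fun x => Real.rpow_nonneg (hpos x).le α₀
  have hv : 0 < μ.real U := ENNReal.toReal_pos hU0 hUμ
  have hG : Tendsto (fun α : ℝ => (a / b) ^ α * (a ^ (-α₀) * C / μ.real U)) atBot (𝓝 0) := by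
    simpa using (tendsto_rpow_atBot_of_base_gt_one _ ((one_lt_div hb).mpr hba)).mul_const
      (a ^ (-α₀) * C / μ.real U)
  refine squeeze_zero' (Eventually.of_forall fun α => div_nonneg
      (integral_nonneg fun x => Real.rpow_nonneg (hpos x).le α)
      (integral_nonneg fun x => Real.rpow_nonneg (hpos x).le α)) ?_ hG
  filter_upwards [eventually_le_atBot (min α₀ 0)] with α hα
  have hden := rpow_mul_measureReal_le_integral_rpow hpos (hα.trans (min_le_right _ _))
    (hint α (hα.trans (min_le_left _ _))) hU hUμ hUf
  have hnum := setIntegral_rpow_le_rpow_sub_mul ha (hα.trans (min_le_left _ _)) hS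
    (hint α₀ le_rfl).integrableOn
  calc (∫ x in {x | a ≤ f x}, f x ^ α ∂μ) / ∫ x, f x ^ α ∂μ
      ≤ a ^ (α - α₀) * C / (b ^ α * μ.real U) :=
        div_le_div₀ (by positivity) hnum (by positivity) hden
    _ = (a / b) ^ α * (a ^ (-α₀) * C / μ.real U) := by
        rw [Real.div_rpow ha.le hb.le, sub_eq_add_neg, Real.rpow_add ha]
        field_simp

end Concentration

theorem ml_invariant_distributions_concentrate_underparametrized_general
    (m : ℕ)
    (f : EuclideanSpace ℝ (Fin m) → ℝ) (hfc : Continuous f)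
    (ε : ℝ) (hε : 0 < ε) (hεinf : IsGLB (Set.range f) ε)
    (c₁ κ R : ℝ) (hc₁ : 0 < c₁) (hκ : 0 < κ)
    (hgrow : ∀ θ : EuclideanSpace ℝ (Fin m), R ≤ ‖θ‖ → c₁ * ‖θ‖ ^ κ ≤ f θ) :
    (∀ α : ℝ, α < -(m : ℝ) / κ →
      Integrable (fun θ => f θ ^ α) ∧ 0 < ∫ θ, f θ ^ α) ∧
    ∀ μ ∈ Set.Ioo (0 : ℝ) 2,
      Tendsto (fun α : ℝ =>
          (∫ θ in {θ | (1 + μ) * ε ≤ f θ}, f θ ^ α) / ∫ θ, f θ ^ α)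
        atBot (𝓝 0) := by
  have hlb : ∀ θ, ε ≤ f θ := fun θ => hεinf.1 (mem_range_self θ)
  have hpos : ∀ θ, 0 < f θ := fun θ => hε.trans_le (hlb θ)
  obtain ⟨c, hc, hcf⟩ := exists_pos_mul_one_add_norm_rpow_le hε hlb hc₁ hκ.le hgrow
  have hint : ∀ α < -(m : ℝ) / κ, Integrable (fun θ => f θ ^ α) := fun α hα =>
    integrable_rpow_of_mul_one_add_norm_rpow_le hfc.aemeasurable hc hcf
      (hα.le.trans (by rw [neg_div]; exact neg_nonpos.mpr (by positivity)))
      (by rw [finrank_euclideanSpace_fin, mul_comm]; exact (lt_div_iff₀ hκ).mp hα)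
  refine ⟨fun α hα => ⟨hint α hα, integral_pos_of_integrable_nonneg_nonzero (x := 0)
    (hfc.rpow_const fun θ => .inl (hpos θ).ne') (hint α hα)
    (fun θ => Real.rpow_nonneg (hpos θ).le α) (Real.rpow_pos_of_pos (hpos 0) α).ne'⟩, ?_⟩
  rintro μ ⟨hμ, -⟩
  obtain ⟨_, ⟨θ₀, rfl⟩, -, hθ₀⟩ := hεinf.exists_between (by nlinarith : ε < (1 + μ) * ε)
  obtain ⟨b, hθ₀b, hba⟩ := exists_between hθ₀
  obtain ⟨r, hr, hball⟩ := Metric.isOpen_iff.mp (isOpen_lt hfc continuous_const) θ₀ hθ₀b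
  exact tendsto_setIntegral_rpow_div_integral_rpow_atBot hfc.measurable hpos hba measurableSet_ball
    measure_ball_lt_top.ne (measure_ball_pos _ θ₀ hr).ne' (fun θ hθ => (hball hθ).le)
    (α₀ := -(m : ℝ) / κ - 1) fun α hα => hint α (by linarith)

/-- **Concentration of ML-noise invariant distributions in the underparametrized regime.**
Let `f > 0` be continuous with infimum `ε > 0`, growing like `c₁|θ|^κ` at infinity with
`c₁ R^κ ≥ 2ε`. Then for every `α < -m/κ` the density `f^α` is integrable with positive
total mass, and for every `μ ∈ (0,2)` the normalized measures concentrate on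
`{f < (1+μ)ε}` as `α → -∞`: `(∫_{f ≥ (1+μ)ε} f^α) / (∫ f^α) → 0`. -/
theorem ml_invariant_distributions_concentrate_underparametrized
    (m : ℕ) (hm : 1 ≤ m)
    (f : EuclideanSpace ℝ (Fin m) → ℝ) (hfpos : ∀ θ, 0 < f θ) (hfc : Continuous f)
    (ε : ℝ) (hε : 0 < ε) (hεinf : IsGLB (Set.range f) ε)
    (c₁ κ R : ℝ) (hc₁ : 0 < c₁) (hκ : 0 < κ) (hR : 0 < R)
    (hgrow : ∀ θ : EuclideanSpace ℝ (Fin m), R ≤ ‖θ‖ → c₁ * ‖θ‖ ^ κ ≤ f θ)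
    (hR2 : 2 * ε ≤ c₁ * R ^ κ) :
    (∀ α : ℝ, α < -(m : ℝ) / κ →
      Integrable (fun θ => f θ ^ α) ∧ 0 < ∫ θ, f θ ^ α) ∧
    ∀ μ ∈ Set.Ioo (0 : ℝ) 2,
      Tendsto (fun α : ℝ =>
          (∫ θ in {θ | (1 + μ) * ε ≤ f θ}, f θ ^ α) / ∫ θ, f θ ^ α)
        atBot (𝓝 0) :=
  ml_invariant_distributions_concentrate_underparametrized_general m f hfc ε hε hεinf c₁ κ R hc₁ hκ
    hgrow
end
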